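/- arXiv:1001.4909 — 5 statements merged into one kernel-verified Lean document; each statement's English description precedes it below -/
import Mathlib

section
/- Let l ∈ (ℤ∖{0})^n and F_1 = Σ_j l_j I_j. Every real polynomial f in the variables (x_1,…,x_n,p_1,…,p_n) satisfying {F_1, f} = 0 is a real linear combination of the functions Re P_{a,b} and Im P_{a,b}, where P_{a,b} = Π_j z_j^{a_j} z̄_j^{b_j} and a, b range over multi-indices in ℤ_{≥0}^n with Σ_j l_j (a_j − b_j) = 0. -/
/-!
In the coordinates `z, z̄` the bracket `{F₁, ·}` is the derivative along the rotation field
`(x, p) ↦ (l p, -l x)`, and every monomial `P_{a,b}` is an eigenfunction of it with eigenvalue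
`-i ∑ l_j (a_j - b_j)`. Since `(z, z̄)` is an invertible linear change of the variables `(x, p)`,
`f` is a complex polynomial `∑ c_{a,b} P_{a,b}`, and the functions `P_{a,b}` are linearly
independent. Hence `{F₁, f} = ∑ -i c_{a,b} ∑ l_j (a_j - b_j) P_{a,b} = 0` forces every
monomial occurring in `f` to be resonant, and `f = Re f` is the claimed combination.
-/

noncomputable section

open Complex

/-- Phase space `ℝ^{2n}`: a point is a pair `(x, p)` of vectors in `ℝ^n`. -/
abbrev Phase (n : ℕ) : Type := (Fin n → ℝ) × (Fin n → ℝ)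

/-- Poisson bracket of complex-valued functions on phase space:
`{f,g} = ∑ j (∂f/∂p_j ∂g/∂x_j − ∂f/∂x_j ∂g/∂p_j)`. -/
def pb {n : ℕ} (f g : Phase n → ℂ) : Phase n → ℂ := fun w =>
  ∑ j : Fin n,
    (fderiv ℝ f w ((0 : Fin n → ℝ), Pi.single j (1 : ℝ)) *
        fderiv ℝ g w (Pi.single j (1 : ℝ), (0 : Fin n → ℝ)) -
      fderiv ℝ f w (Pi.single j (1 : ℝ), (0 : Fin n → ℝ)) *
        fderiv ℝ g w ((0 : Fin n → ℝ), Pi.single j (1 : ℝ)))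

/-- Poisson bracket of real-valued functions on phase space. -/
def pbR {n : ℕ} (f g : Phase n → ℝ) : Phase n → ℝ := fun w =>
  ∑ j : Fin n,
    (fderiv ℝ f w ((0 : Fin n → ℝ), Pi.single j (1 : ℝ)) *
        fderiv ℝ g w (Pi.single j (1 : ℝ), (0 : Fin n → ℝ)) -
      fderiv ℝ f w (Pi.single j (1 : ℝ), (0 : Fin n → ℝ)) *
        fderiv ℝ g w ((0 : Fin n → ℝ), Pi.single j (1 : ℝ)))

/-- `z_j = (x_j + i p_j)/√2`. -/
def zf {n : ℕ} (j : Fin n) (w : Phase n) : ℂ :=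
  ((w.1 j : ℂ) + Complex.I * (w.2 j : ℂ)) / ((Real.sqrt 2 : ℝ) : ℂ)

/-- `z̄_j = (x_j − i p_j)/√2`. -/
def zbf {n : ℕ} (j : Fin n) (w : Phase n) : ℂ :=
  ((w.1 j : ℂ) - Complex.I * (w.2 j : ℂ)) / ((Real.sqrt 2 : ℝ) : ℂ)

/-- `I_j = z_j z̄_j` (complex-valued; its values are real). -/
def Iact {n : ℕ} (j : Fin n) (w : Phase n) : ℂ := zf j w * zbf j w

/-- `I_j = (x_j² + p_j²)/2` (real-valued). -/
def IR {n : ℕ} (j : Fin n) (w : Phase n) : ℝ := (w.1 j ^ 2 + w.2 j ^ 2) / 2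

/-- A family of real functions on phase space is functionally independent if their
differentials are linearly independent at every point of some dense open set. -/
def FunctionallyIndependent {n : ℕ} {ι : Type*} (f : ι → Phase n → ℝ) : Prop :=
  ∃ U : Set (Phase n), IsOpen U ∧ Dense U ∧
    ∀ w ∈ U, LinearIndependent ℝ (fun i => fderiv ℝ (f i) w)

/-- The monomial `P_{a,b} = ∏_j z_j^{a_j} z̄_j^{b_j}`. -/
def Pab {n : ℕ} (a b : Fin n → ℕ) (w : Phase n) : ℂ :=
  ∏ j : Fin n, zf j w ^ a j * zbf j w ^ b j

/-- `R_m = ∏_j ζ_j^{m_j}`, with `ζ_j^{m_j} = z_j^{m_j}` for `m_j ≥ 0` and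
`ζ_j^{m_j} = z̄_j^{−m_j}` for `m_j < 0`. -/
def Rm {n : ℕ} (m : Fin n → ℤ) (w : Phase n) : ℂ :=
  ∏ j : Fin n, if 0 ≤ m j then zf j w ^ (m j).toNat else zbf j w ^ (-(m j)).toNat

/-- `w_i = z_i` if `ε_i = 1`, `w_i = z̄_i` if `ε_i = −1`. -/
def wfun {n : ℕ} (ε : Fin n → ℤ) (i : Fin n) (w : Phase n) : ℂ :=
  if ε i = 1 then zf i w else zbf i w

/-- `w̄_i`, the complex conjugate of `w_i`. -/
def wbfun {n : ℕ} (ε : Fin n → ℤ) (i : Fin n) (w : Phase n) : ℂ :=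
  if ε i = 1 then zbf i w else zf i w

/-- `P_{ij} = i(w_i w̄_j − w_j w̄_i)` (complex-valued; its values are real). -/
def Pf {n : ℕ} (ε : Fin n → ℤ) (i j : Fin n) (w : Phase n) : ℂ :=
  Complex.I * (wfun ε i w * wbfun ε j w - wfun ε j w * wbfun ε i w)

/-- `P_{ij}` as a real-valued function. -/
def PfR {n : ℕ} (ε : Fin n → ℤ) (i j : Fin n) (w : Phase n) : ℝ :=
  (Pf ε i j w).re

section Eigenfunction

variable {E : Type*} [NormedAddCommGroup E] [NormedSpace ℝ E] (V : E → E)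

def IsEigenfunctionAlong (c : ℂ) (g : E → ℂ) : Prop :=
  Differentiable ℝ g ∧ ∀ x, fderiv ℝ g x (V x) = c * g x

variable {V}

theorem isEigenfunctionAlong_one : IsEigenfunctionAlong V 0 (fun _ => 1) :=
  ⟨differentiable_const 1, fun x => by simp⟩

theorem IsEigenfunctionAlong.mul {c d : ℂ} {g h : E → ℂ} (hg : IsEigenfunctionAlong V c g)
    (hh : IsEigenfunctionAlong V d h) : IsEigenfunctionAlong V (c + d) (fun x => g x * h x) := by
  refine ⟨hg.1.mul hh.1, fun x => ?_⟩
  rw [fderiv_fun_mul (hg.1 x) (hh.1 x)]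
  simp only [add_apply, smul_apply, smul_eq_mul, hg.2, hh.2]
  ring

theorem IsEigenfunctionAlong.prod {ι : Type*} {c : ι → ℂ} {g : ι → E → ℂ}
    (hg : ∀ i, IsEigenfunctionAlong V (c i) (g i)) (s : Finset ι) :
    IsEigenfunctionAlong V (∑ i ∈ s, c i) (fun x => ∏ i ∈ s, g i x) := by
  classical
  induction s using Finset.induction_on with
  | empty => simpa using isEigenfunctionAlong_one
  | insert i s hi ih => simpa [Finset.sum_insert hi, Finset.prod_insert hi] using (hg i).mul ih

theorem IsEigenfunctionAlong.pow {c : ℂ} {g : E → ℂ} (hg : IsEigenfunctionAlong V c g)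
    (k : ℕ) :
    IsEigenfunctionAlong V (k * c) (fun x => g x ^ k) := by
  simpa using IsEigenfunctionAlong.prod (fun _ => hg) (Finset.range k)

theorem IsEigenfunctionAlong.fderiv_sum_smul_apply {ι : Type*} {c μ : ι → ℂ}
    {g : ι → E → ℂ} (hg : ∀ i, IsEigenfunctionAlong V (μ i) (g i)) (s : Finset ι)
    (x : E) :
    fderiv ℝ (∑ i ∈ s, c i • g i) x (V x) = (∑ i ∈ s, (c i * μ i) • g i) x := by
  rw [fderiv_sum fun i _ => ((hg i).1 x).const_smul (c i)]
  simp only [sum_apply, Finset.sum_apply, Pi.smul_apply, smul_eq_mul]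
  refine Finset.sum_congr rfl fun i _ => ?_
  rw [fderiv_const_smul ((hg i).1 x), smul_apply, smul_eq_mul, (hg i).2]
  ring

end Eigenfunction

namespace PhaseSpace

variable {n : ℕ}

theorem inv_sqrt_two_sq : ((√2 : ℂ)⁻¹) ^ 2 = 2⁻¹ := by
  rw [inv_pow, ← ofReal_pow, Real.sq_sqrt zero_le_two, ofReal_ofNat]

def zfCLM (j : Fin n) : Phase n →L[ℝ] ℂ :=
  LinearMap.toContinuousLinearMap
    { toFun := zf j
      map_add' := fun v v' => by simp [zf]; ring
      map_smul' := fun c v => by simp [zf, real_smul]; ring }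

def zbfCLM (j : Fin n) : Phase n →L[ℝ] ℂ :=
  LinearMap.toContinuousLinearMap
    { toFun := zbf j
      map_add' := fun v v' => by simp [zbf]; ring
      map_smul' := fun c v => by simp [zbf, real_smul]; ring }

theorem hasFDerivAt_zf (j : Fin n) (w : Phase n) : HasFDerivAt (zf j) (zfCLM j) w :=
  (zfCLM j).hasFDerivAt

theorem hasFDerivAt_zbf (j : Fin n) (w : Phase n) : HasFDerivAt (zbf j) (zbfCLM j) w :=
  (zbfCLM j).hasFDerivAt

theorem zf_mul_zbf_add_zbf_mul_zf (j : Fin n) (w v : Phase n) :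
    zf j w * zbf j v + zbf j w * zf j v = ((w.1 j * v.1 j + w.2 j * v.2 j : ℝ) : ℂ) := by
  simp only [zf, zbf, div_eq_mul_inv]
  push_cast
  linear_combination (2 * ((w.1 j : ℂ) * v.1 j - I ^ 2 * (w.2 j * v.2 j))) * inv_sqrt_two_sq
    - (w.2 j * v.2 j : ℂ) * I_sq

theorem fderiv_F1_apply (l : Fin n → ℤ) (w v : Phase n) :
    fderiv ℝ (fun w => ∑ j : Fin n, (l j : ℂ) * Iact j w) w v
      = ∑ j : Fin n, ((l j * (w.1 j * v.1 j + w.2 j * v.2 j) : ℝ) : ℂ) := by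
  have hF : HasFDerivAt (fun w => ∑ j : Fin n, (l j : ℂ) * Iact j w)
      (∑ j : Fin n, (l j : ℂ) • (zf j w • zbfCLM j + zbf j w • zfCLM j)) w :=
    HasFDerivAt.fun_sum fun j _ => ((hasFDerivAt_zf j w).mul (hasFDerivAt_zbf j w)).const_mul _
  rw [hF.fderiv, sum_apply]
  refine Finset.sum_congr rfl fun j _ => ?_
  simp only [smul_apply, add_apply, smul_eq_mul]
  rw [show zfCLM j v = zf j v from rfl, show zbfCLM j v = zbf j v from rfl,
    zf_mul_zbf_add_zbf_mul_zf]
  push_cast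
  ring

def rotField (l : Fin n → ℤ) (w : Phase n) : Phase n :=
  (fun j => l j * w.2 j, fun j => -(l j * w.1 j))

theorem pb_F1_eq_fderiv_rotField (l : Fin n → ℤ) (g : Phase n → ℂ) (w : Phase n) :
    pb (fun w => ∑ j : Fin n, (l j : ℂ) * Iact j w) g w = fderiv ℝ g w (rotField l w) := by
  have hV : rotField l w = ∑ j : Fin n,
      ((l j * w.2 j) • (Pi.single j (1 : ℝ), (0 : Fin n → ℝ))
        - (l j * w.1 j) • ((0 : Fin n → ℝ), Pi.single j (1 : ℝ))) := by
    ext i <;> simp [rotField, Prod.fst_sum, Prod.snd_sum, Pi.single_apply]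
  rw [hV, map_sum]
  refine Finset.sum_congr rfl fun j _ => ?_
  rw [map_sub, map_smul, map_smul, real_smul, real_smul]
  simp [fderiv_F1_apply, Pi.single_apply, apply_ite ((↑) : ℝ → ℂ)]

theorem zf_rotField (l : Fin n → ℤ) (j : Fin n) (w : Phase n) :
    zf j (rotField l w) = -I * l j * zf j w := by
  simp only [zf, rotField]
  push_cast
  linear_combination ((l j : ℂ) * w.2 j / (√2 : ℂ)) * I_sq

theorem zbf_rotField (l : Fin n → ℤ) (j : Fin n) (w : Phase n) :
    zbf j (rotField l w) = I * l j * zbf j w := by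
  simp only [zbf, rotField]
  push_cast
  linear_combination ((l j : ℂ) * w.2 j / (√2 : ℂ)) * I_sq

theorem isEigenfunctionAlong_zf (l : Fin n → ℤ) (j : Fin n) :
    IsEigenfunctionAlong (rotField l) (-I * l j) (zf j) :=
  ⟨fun w => (hasFDerivAt_zf j w).differentiableAt,
    fun w => by rw [(hasFDerivAt_zf j w).fderiv]; exact zf_rotField l j w⟩

theorem isEigenfunctionAlong_zbf (l : Fin n → ℤ) (j : Fin n) :
    IsEigenfunctionAlong (rotField l) (I * l j) (zbf j) :=
  ⟨fun w => (hasFDerivAt_zbf j w).differentiableAt,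
    fun w => by rw [(hasFDerivAt_zbf j w).fderiv]; exact zbf_rotField l j w⟩

def weight (l : Fin n → ℤ) (a b : Fin n → ℕ) : ℤ :=
  ∑ j : Fin n, l j * ((a j : ℤ) - (b j : ℤ))

theorem isEigenfunctionAlong_Pab (l : Fin n → ℤ) (a b : Fin n → ℕ) :
    IsEigenfunctionAlong (rotField l) (-I * weight l a b) (Pab a b) := by
  convert IsEigenfunctionAlong.prod (fun j => ((isEigenfunctionAlong_zf l j).pow (a j)).mul
    ((isEigenfunctionAlong_zbf l j).pow (b j))) Finset.univ using 1
  · simp only [weight, Int.cast_sum, Int.cast_mul, Int.cast_sub, Int.cast_natCast, Finset.mul_sum]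
    exact Finset.sum_congr rfl fun j _ => by ring
  · rfl

open MvPolynomial

theorem aeval_pi_apply {R A σ X : Type*} [CommSemiring R] [CommSemiring A] [Algebra R A]
    (g : σ → X → A) (r : MvPolynomial σ R) (x : X) : aeval g r x = aeval (fun k => g k x) r :=
  comp_aeval_apply g (Pi.evalAlgHom R (fun _ => A) x) r

def xpCoord (k : Fin n ⊕ Fin n) (w : Phase n) : ℂ := (Sum.elim w.1 w.2 k : ℝ)

def zEval : MvPolynomial (Fin n ⊕ Fin n) ℂ →ₐ[ℂ] Phase n → ℂ :=
  aeval (Sum.elim zf zbf)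

def zInXp : Fin n ⊕ Fin n → MvPolynomial (Fin n ⊕ Fin n) ℂ :=
  Sum.elim (fun j => C (√2 : ℂ)⁻¹ * (X (.inl j) + C I * X (.inr j)))
    (fun j => C (√2 : ℂ)⁻¹ * (X (.inl j) - C I * X (.inr j)))

def xpInZ : Fin n ⊕ Fin n → MvPolynomial (Fin n ⊕ Fin n) ℂ :=
  Sum.elim (fun j => C (√2 : ℂ)⁻¹ * (X (.inl j) + X (.inr j)))
    (fun j => C (-I * (√2 : ℂ)⁻¹) * (X (.inl j) - X (.inr j)))

theorem aeval_xpCoord_zInXp (k : Fin n ⊕ Fin n) :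
    aeval xpCoord (zInXp k) = Sum.elim zf zbf k := by
  funext w
  cases k <;> simp [zInXp, xpCoord, zf, zbf, aeval_pi_apply] <;> ring

theorem zEval_xpInZ (k : Fin n ⊕ Fin n) : zEval (xpInZ k) = xpCoord k := by
  funext w
  cases k with
  | inl j =>
    simp [zEval, xpInZ, xpCoord, zf, zbf, aeval_pi_apply, div_eq_mul_inv]
    linear_combination (2 * (w.1 j : ℂ)) * inv_sqrt_two_sq
  | inr j =>
    simp [zEval, xpInZ, xpCoord, zf, zbf, aeval_pi_apply, div_eq_mul_inv]
    linear_combination (-2 * I ^ 2 * (w.2 j : ℂ)) * inv_sqrt_two_sq - (w.2 j : ℂ) * I_sq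

theorem aeval_xpInZ_zInXp (k : Fin n ⊕ Fin n) : aeval xpInZ (zInXp k) = X k := by
  refine MvPolynomial.funext fun u => ?_
  change aeval u _ = aeval u _
  rw [comp_aeval_apply]
  cases k with
  | inl j =>
    simp [zInXp, xpInZ]
    linear_combination
      (u (.inl j) + u (.inr j) - I ^ 2 * (u (.inl j) - u (.inr j))) * inv_sqrt_two_sq
        - (u (.inl j) - u (.inr j)) / 2 * I_sq
  | inr j =>
    simp [zInXp, xpInZ]
    linear_combination
      (u (.inl j) + u (.inr j) + I ^ 2 * (u (.inl j) - u (.inr j))) * inv_sqrt_two_sq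
        + (u (.inl j) - u (.inr j)) / 2 * I_sq

theorem aeval_xpCoord_injective : Function.Injective (aeval (R := ℂ) (xpCoord (n := n))) := by
  refine (injective_iff_map_eq_zero _).mpr fun r hr => ?_
  refine funext_set (fun _ => Set.range ((↑) : ℝ → ℂ))
    (fun _ => Set.infinite_range_of_injective ofReal_injective) fun u hu => ?_
  choose y hy using fun k => hu k (Set.mem_univ k)
  have hu : (fun k => xpCoord k (fun j => y (.inl j), fun j => y (.inr j))) = u := by
    funext k; cases k <;> simp [xpCoord, hy]
  simpa [aeval_pi_apply, hu] using congrFun hr (fun j => y (.inl j), fun j => y (.inr j))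

theorem zEval_injective : Function.Injective (zEval (n := n)) := by
  have hz : zEval (n := n) = (aeval (R := ℂ) xpCoord).comp (aeval zInXp) := by
    rw [comp_aeval]; exact congrArg aeval (funext fun k => (aeval_xpCoord_zInXp k).symm)
  have hleft (r : MvPolynomial (Fin n ⊕ Fin n) ℂ) : aeval xpInZ (aeval zInXp r) = r := by
    rw [comp_aeval_apply, funext aeval_xpInZ_zInXp, aeval_X_left_apply]
  intro r r' h
  rw [hz] at h
  rw [← hleft r, ← hleft r']
  exact congrArg _ (aeval_xpCoord_injective h)

def zMonomial (m : (Fin n ⊕ Fin n) →₀ ℕ) : Phase n → ℂ :=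
  Pab (fun j => m (.inl j)) (fun j => m (.inr j))

theorem zEval_monomial (m : (Fin n ⊕ Fin n) →₀ ℕ) : zEval (monomial m 1) = zMonomial m := by
  funext w
  simp [zEval, zMonomial, Pab, aeval_monomial, Finsupp.prod_pow, Fintype.prod_sum_type,
    Finset.prod_mul_distrib]

theorem linearIndependent_zMonomial : LinearIndependent ℂ (zMonomial (n := n)) := by
  have h := (basisMonomials (Fin n ⊕ Fin n) ℂ).linearIndependent.map' zEval.toLinearMap
    (LinearMap.ker_eq_bot.mpr zEval_injective)
  have he : zEval.toLinearMap ∘ basisMonomials (Fin n ⊕ Fin n) ℂ = zMonomial := by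
    funext m
    simp [coe_basisMonomials, zEval_monomial]
  rwa [he] at h

theorem exists_zEval_eq (Q : MvPolynomial (Fin n ⊕ Fin n) ℝ) :
    ∃ q : MvPolynomial (Fin n ⊕ Fin n) ℂ,
      (zEval q : Phase n → ℂ) = fun w => ((eval (Sum.elim w.1 w.2) Q : ℝ) : ℂ) := by
  refine ⟨aeval xpInZ Q, funext fun w => ?_⟩
  rw [← AlgHom.restrictScalars_apply ℝ, comp_aeval_apply]
  simp only [AlgHom.restrictScalars_apply, zEval_xpInZ, aeval_pi_apply]
  exact aeval_algebraMap_apply ℂ (Sum.elim w.1 w.2) Q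

theorem zEval_eq_sum (q : MvPolynomial (Fin n ⊕ Fin n) ℂ) :
    (zEval q : Phase n → ℂ) = ∑ m ∈ q.support, coeff m q • zMonomial m := by
  conv_lhs => rw [q.as_sum]
  simp only [map_sum, ← zEval_monomial, ← map_smul, smul_eq_mul, mul_one]

theorem weight_eq_zero_of_fderiv_rotField_eq_zero (l : Fin n → ℤ)
    (q : MvPolynomial (Fin n ⊕ Fin n) ℂ) (hq : ∀ w, fderiv ℝ (zEval q) w (rotField l w) = 0)
    (m : (Fin n ⊕ Fin n) →₀ ℕ) (hm : m ∈ q.support) :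
    weight l (fun j => m (.inl j)) (fun j => m (.inr j)) = 0 := by
  have hD : ∑ m ∈ q.support,
      (coeff m q * (-I * weight l (fun j => m (.inl j)) (fun j => m (.inr j)))) • zMonomial m
      = 0 := by
    funext w
    rw [← IsEigenfunctionAlong.fderiv_sum_smul_apply (g := zMonomial)
      (fun m => isEigenfunctionAlong_Pab l _ _), ← zEval_eq_sum, hq, Pi.zero_apply]
  have h := linearIndependent_iff'.mp linearIndependent_zMonomial _ _ hD m hm
  simpa [mem_support_iff.mp hm, I_ne_zero] using h

theorem re_zEval_mem_span (l : Fin n → ℤ) (q : MvPolynomial (Fin n ⊕ Fin n) ℂ)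
    (hq : ∀ m ∈ q.support, weight l (fun j => m (.inl j)) (fun j => m (.inr j)) = 0) :
    (fun w => (zEval q w).re) ∈ Submodule.span ℝ {g : Phase n → ℝ |
      ∃ a b : Fin n → ℕ, weight l a b = 0 ∧
        ((g = fun w => (Pab a b w).re) ∨ (g = fun w => (Pab a b w).im))} := by
  have hre : (fun w => (zEval q w).re) = ∑ m ∈ q.support,
      ((coeff m q).re • (fun w => (zMonomial m w).re)
        - (coeff m q).im • fun w => (zMonomial m w).im) := by
    funext w
    simp [zEval_eq_sum, Finset.sum_apply, re_sum, mul_re]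
  rw [hre]
  exact Submodule.sum_mem _ fun m hm => Submodule.sub_mem _
    (Submodule.smul_mem _ _ (Submodule.subset_span ⟨_, _, hq m hm, Or.inl rfl⟩))
    (Submodule.smul_mem _ _ (Submodule.subset_span ⟨_, _, hq m hm, Or.inr rfl⟩))

end PhaseSpace

open PhaseSpace

theorem statement1_general (n : ℕ) (l : Fin n → ℤ)
    (F1 : Phase n → ℂ) (hF1 : F1 = fun w => ∑ j : Fin n, (l j : ℂ) * Iact j w)
    (f : Phase n → ℝ)
    (hpoly : ∃ Q : MvPolynomial (Fin n ⊕ Fin n) ℝ,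
      f = fun w => MvPolynomial.eval (Sum.elim w.1 w.2) Q)
    (hinv : pb F1 (fun w => ((f w : ℝ) : ℂ)) = 0) :
    f ∈ Submodule.span ℝ {g : Phase n → ℝ |
      ∃ a b : Fin n → ℕ, (∑ j : Fin n, l j * ((a j : ℤ) - (b j : ℤ))) = 0 ∧
        ((g = fun w => (Pab a b w).re) ∨ (g = fun w => (Pab a b w).im))} := by
  obtain ⟨Q, rfl⟩ := hpoly
  obtain ⟨q, hq⟩ := exists_zEval_eq Q
  subst hF1
  have hresonant := weight_eq_zero_of_fderiv_rotField_eq_zero l q fun w => by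
    rw [← pb_F1_eq_fderiv_rotField, hq]
    exact congrFun hinv w
  have hre : (fun w : Phase n => MvPolynomial.eval (Sum.elim w.1 w.2) Q)
      = fun w => (zEval q w).re := by
    simp [hq]
  rw [hre]
  exact re_zEval_mem_span l q hresonant

/-- every real polynomial in `(x,p)` which is in involution with
`F₁ = ∑_j l_j I_j` is a real linear combination of the functions `Re P_{a,b}`, `Im P_{a,b}`
with `∑_j l_j (a_j − b_j) = 0`. -/
theorem statement1 (n : ℕ) (l : Fin n → ℤ) (hl : ∀ j, l j ≠ 0)
    (F1 : Phase n → ℂ) (hF1 : F1 = fun w => ∑ j : Fin n, (l j : ℂ) * Iact j w)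
    (f : Phase n → ℝ)
    (hpoly : ∃ Q : MvPolynomial (Fin n ⊕ Fin n) ℝ,
      f = fun w => MvPolynomial.eval (Sum.elim w.1 w.2) Q)
    (hinv : pb F1 (fun w => ((f w : ℝ) : ℂ)) = 0) :
    f ∈ Submodule.span ℝ {g : Phase n → ℝ |
      ∃ a b : Fin n → ℕ, (∑ j : Fin n, l j * ((a j : ℤ) - (b j : ℤ))) = 0 ∧
        ((g = fun w => (Pab a b w).re) ∨ (g = fun w => (Pab a b w).im))} :=
  statement1_general n l F1 hF1 f hpoly hinv
end
end

section
/- Let n ≥ 2 and l ∈ ℤ^n with l_j ≥ 1 for every j, and set F_1 = Σ_j l_j I_j and R_{1j} = Im(z_1^{l_j} z̄_j^{l_1}) for j = 2,…,n. Then {F_1, I_j} = 0 and {F_1, R_{1j}} = 0 for every j = 2,…,n, and the 2n−1 functions (F_1, I_2, …, I_n, R_{12}, …, R_{1n}) are functionally independent; hence they form an integrable set whose single central element is the Hamiltonian F_1 of the fully resonant linear oscillators. -/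
noncomputable section

open Complex

/-!
Let `rotField k` be the infinitesimal rotation `ż_k = i z_k` of the `k`-th coordinate plane. Then
`{∑ c_k I_k, g} = -∑ c_k dg(rotField k)`. Every `I_j` is invariant under these rotations, and the
monomial `z_a^α z̄_b^β` is an eigenvector with eigenvalue `i (α δ_{ak} - β δ_{bk})`; for
`R_{1j}` the resonance `l₁ l_j = l_j l₁` makes the eigenvalues cancel in `{F₁, R_{1j}}`.

For independence, evaluate the differentials on `rotField j` (which kills all of them except
`dR_{1j}`, whose value is `-l₁ Re (z₁^{l_j} z̄_j^{l₁})`), then on `∂/∂x₁` and on `∂/∂x_j`. The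
resulting triangular system is nondegenerate wherever all `x_k` and all `Re (z₁^{l_k} z̄_k^{l₁})`
are nonzero, i.e. off the zero set of a real-analytic function that does not vanish identically;
that set is open and dense.
-/

lemma dense_setOf_ne_zero_of_analyticOnNhd {𝕜 E F : Type*} [NontriviallyNormedField 𝕜]
    [NormedAddCommGroup E] [NormedSpace 𝕜 E] [PreconnectedSpace E]
    [NormedAddCommGroup F] [NormedSpace 𝕜 F] {f : E → F} (hf : AnalyticOnNhd 𝕜 f Set.univ)
    {x₀ : E} (hx₀ : f x₀ ≠ 0) : Dense {x | f x ≠ 0} := by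
  rw [dense_iff_inter_open]
  rintro U hU ⟨y, hy⟩
  by_contra hUf
  have hf0 : f =ᶠ[nhds y] 0 := by
    filter_upwards [hU.mem_nhds hy] with x hx
    by_contra hfx
    exact hUf ⟨x, hx, hfx⟩
  exact hx₀ (congrFun (hf.eq_of_eventuallyEq analyticOnNhd_const hf0) x₀)

lemma fderiv_im_apply {E : Type*} [NormedAddCommGroup E] [NormedSpace ℝ E] {g : E → ℂ} {x : E}
    (hg : DifferentiableAt ℝ g x) (v : E) :
    fderiv ℝ (fun x => (g x).im) x v = (fderiv ℝ g x v).im := by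
  have h : HasFDerivAt (fun x => (g x).im) (imCLM.comp (fderiv ℝ g x)) x :=
    imCLM.hasFDerivAt.comp x hg.hasFDerivAt
  rw [h.fderiv]
  rfl

section PhaseSpace

variable {n : ℕ}

def zfCLM (j : Fin n) : Phase n →L[ℝ] ℂ :=
  LinearMap.toContinuousLinearMap
    { toFun := zf j
      map_add' := fun v v' => by
        simp only [zf, Prod.fst_add, Prod.snd_add, Pi.add_apply]; push_cast; ring
      map_smul' := fun c v => by
        simp only [zf, Prod.smul_fst, Prod.smul_snd, Pi.smul_apply, RingHom.id_apply, smul_eq_mul,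
          Complex.real_smul]; push_cast; ring }

def zbfCLM (j : Fin n) : Phase n →L[ℝ] ℂ :=
  LinearMap.toContinuousLinearMap
    { toFun := zbf j
      map_add' := fun v v' => by
        simp only [zbf, Prod.fst_add, Prod.snd_add, Pi.add_apply]; push_cast; ring
      map_smul' := fun c v => by
        simp only [zbf, Prod.smul_fst, Prod.smul_snd, Pi.smul_apply, RingHom.id_apply, smul_eq_mul,
          Complex.real_smul]; push_cast; ring }

@[simp] lemma zfCLM_apply (j : Fin n) (v : Phase n) : zfCLM j v = zf j v := rfl

@[simp] lemma zbfCLM_apply (j : Fin n) (v : Phase n) : zbfCLM j v = zbf j v := rfl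

lemma hasFDerivAt_zf (j : Fin n) (w : Phase n) : HasFDerivAt (zf j) (zfCLM j) w :=
  (zfCLM j).hasFDerivAt

lemma hasFDerivAt_zbf (j : Fin n) (w : Phase n) : HasFDerivAt (zbf j) (zbfCLM j) w :=
  (zbfCLM j).hasFDerivAt

def xCLM (j : Fin n) : Phase n →L[ℝ] ℝ :=
  (ContinuousLinearMap.proj j).comp (ContinuousLinearMap.fst ℝ _ _)

def pCLM (j : Fin n) : Phase n →L[ℝ] ℝ :=
  (ContinuousLinearMap.proj j).comp (ContinuousLinearMap.snd ℝ _ _)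

lemma hasFDerivAt_IR (j : Fin n) (w : Phase n) :
    HasFDerivAt (IR j) (w.1 j • xCLM j + w.2 j • pCLM j) w := by
  have hx : HasFDerivAt (xCLM j) (xCLM j) w := (xCLM j).hasFDerivAt
  have hp : HasFDerivAt (pCLM j) (pCLM j) w := (pCLM j).hasFDerivAt
  have h := ((hx.pow 2).fun_add (hp.pow 2)).const_mul (2⁻¹ : ℝ)
  refine (h.congr_fderiv ?_).congr_of_eventuallyEq (.of_forall fun v => ?_)
  · ext v <;> simp [xCLM, pCLM] <;> ring
  · simp [IR, xCLM, pCLM]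
    ring

lemma fderiv_IR_apply (j : Fin n) (w v : Phase n) :
    fderiv ℝ (IR j) w v = w.1 j * v.1 j + w.2 j * v.2 j := by
  simp [(hasFDerivAt_IR j w).fderiv, xCLM, pCLM]

lemma fderiv_sum_mul_IR_apply (c : Fin n → ℝ) (w v : Phase n) :
    fderiv ℝ (fun w => ∑ k, c k * IR k w) w v = ∑ k, c k * fderiv ℝ (IR k) w v := by
  rw [(HasFDerivAt.fun_sum fun k _ => (hasFDerivAt_IR k w).const_mul (c k)).fderiv]
  simp [(hasFDerivAt_IR _ w).fderiv, mul_add]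

def rotField (k : Fin n) (w : Phase n) : Phase n :=
  (Pi.single k (-w.2 k), Pi.single k (w.1 k))

lemma rotField_eq (k : Fin n) (w : Phase n) :
    rotField k w = (-w.2 k) • (Pi.single k 1, 0) + w.1 k • (0, Pi.single k 1) := by
  ext i <;> by_cases h : i = k <;> simp [rotField, h]

lemma zf_rotField (j k : Fin n) (w : Phase n) :
    zf j (rotField k w) = if j = k then I * zf j w else 0 := by
  unfold rotField zf
  split_ifs with h
  · subst h
    simp only [Pi.single_eq_same, ofReal_neg]
    linear_combination (-(w.2 j : ℂ) / (Real.sqrt 2 : ℝ)) * I_sq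
  · simp [h]

lemma zbf_rotField (j k : Fin n) (w : Phase n) :
    zbf j (rotField k w) = if j = k then -I * zbf j w else 0 := by
  unfold rotField zbf
  split_ifs with h
  · subst h
    simp only [Pi.single_eq_same, ofReal_neg]
    linear_combination (-(w.2 j : ℂ) / (Real.sqrt 2 : ℝ)) * I_sq
  · simp [h]

lemma fderiv_IR_rotField (j k : Fin n) (w : Phase n) : fderiv ℝ (IR j) w (rotField k w) = 0 := by
  rw [fderiv_IR_apply]
  by_cases h : j = k
  · subst h
    simp only [rotField, Pi.single_eq_same]
    ring
  · simp [rotField, h]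

lemma fderiv_sum_mul_IR_rotField (c : Fin n → ℝ) (k : Fin n) (w : Phase n) :
    fderiv ℝ (fun w => ∑ j, c j * IR j w) w (rotField k w) = 0 := by
  simp [fderiv_sum_mul_IR_apply, fderiv_IR_rotField]

lemma hasFDerivAt_monomial (a b : Fin n) (α β : ℕ) (w : Phase n) :
    HasFDerivAt (fun w => zf a w ^ α * zbf b w ^ β)
      (zf a w ^ α • (β • zbf b w ^ (β - 1)) • zbfCLM b +
        zbf b w ^ β • (α • zf a w ^ (α - 1)) • zfCLM a) w :=
  ((hasFDerivAt_zf a w).pow α).fun_mul ((hasFDerivAt_zbf b w).pow β)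

lemma fderiv_monomial_rotField (a b k : Fin n) (α β : ℕ) (w : Phase n) :
    fderiv ℝ (fun w => zf a w ^ α * zbf b w ^ β) w (rotField k w) =
      I * ((if a = k then (α : ℂ) else 0) - (if b = k then (β : ℂ) else 0)) *
        (zf a w ^ α * zbf b w ^ β) := by
  rw [(hasFDerivAt_monomial a b α β w).fderiv]
  simp only [add_apply, smul_apply, zfCLM_apply, zbfCLM_apply, zf_rotField, zbf_rotField,
    smul_eq_mul, nsmul_eq_mul]
  split_ifs <;> cases α <;> cases β <;> simp [pow_succ] <;> ring

lemma pbR_sum_mul_IR (c : Fin n → ℝ) (g : Phase n → ℝ) (w : Phase n) :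
    pbR (fun w => ∑ k, c k * IR k w) g w = -∑ k, c k * fderiv ℝ g w (rotField k w) := by
  rw [← Finset.sum_neg_distrib]
  refine Finset.sum_congr rfl fun k _ => ?_
  rw [rotField_eq, map_add, map_smul, map_smul, fderiv_sum_mul_IR_apply, fderiv_sum_mul_IR_apply]
  simp [fderiv_IR_apply, Pi.single_apply]
  ring

lemma pbR_sum_mul_IR_IR (c : Fin n → ℝ) (j : Fin n) :
    pbR (fun w => ∑ k, c k * IR k w) (IR j) = 0 := by
  funext w
  simp [pbR_sum_mul_IR, fderiv_IR_rotField]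

lemma pbR_sum_mul_IR_im_monomial (c : Fin n → ℝ) (a b : Fin n) (α β : ℕ)
    (hres : c a * α = c b * β) :
    pbR (fun w => ∑ k, c k * IR k w) (fun w => (zf a w ^ α * zbf b w ^ β).im) = 0 := by
  funext w
  rw [pbR_sum_mul_IR]
  simp only [fderiv_im_apply (hasFDerivAt_monomial a b α β w).differentiableAt,
    fderiv_monomial_rotField]
  have hsum : ∑ k, (c k : ℂ) *
      (I * ((if a = k then (α : ℂ) else 0) - (if b = k then (β : ℂ) else 0)) *
        (zf a w ^ α * zbf b w ^ β)) = 0 := by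
    simp only [mul_sub, sub_mul, mul_ite, ite_mul, mul_zero, zero_mul, Finset.sum_sub_distrib,
      Finset.sum_ite_eq, Finset.mem_univ, if_true]
    have hresC : (c a : ℂ) * α = c b * β := by exact_mod_cast hres
    linear_combination (I * (zf a w ^ α * zbf b w ^ β)) * hresC
  simp only [← Complex.im_ofReal_mul, ← Complex.im_sum, hsum, Complex.zero_im, neg_zero,
    Pi.zero_apply]

lemma fderiv_IR_apply_single_zero (j k : Fin n) (w : Phase n) :
    fderiv ℝ (IR j) w (Pi.single k 1, 0) = if j = k then w.1 j else 0 := by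
  by_cases h : j = k <;> simp [fderiv_IR_apply, h]

lemma fderiv_im_monomial_rotField_of_ne {a k : Fin n} (hak : a ≠ k) (b : Fin n) (α β : ℕ)
    (w : Phase n) :
    fderiv ℝ (fun w => (zf a w ^ α * zbf b w ^ β).im) w (rotField k w) =
      if b = k then -(β * (zf a w ^ α * zbf b w ^ β).re) else 0 := by
  rw [fderiv_im_apply (hasFDerivAt_monomial a b α β w).differentiableAt, fderiv_monomial_rotField,
    if_neg hak]
  split_ifs <;> simp [Complex.mul_im]

def resonantFamily (c : Fin n → ℝ) (i0 : Fin n) (α : Fin n → ℕ) (β : ℕ) :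
    Unit ⊕ ({j : Fin n // j ≠ i0} ⊕ {j : Fin n // j ≠ i0}) → Phase n → ℝ :=
  Sum.elim (fun _ w => ∑ j, c j * IR j w)
    (Sum.elim (fun j => IR j.1) (fun j w => (zf i0 w ^ α j.1 * zbf j.1 w ^ β).im))

def resonantGenericity (i0 : Fin n) (α : Fin n → ℕ) (β : ℕ) (w : Phase n) : ℝ :=
  ∏ k, w.1 k * (zf i0 w ^ α k * zbf k w ^ β).re

lemma linearIndependent_fderiv_resonantFamily {c : Fin n → ℝ} {i0 : Fin n} (hc : c i0 ≠ 0)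
    (α : Fin n → ℕ) {β : ℕ} (hβ : β ≠ 0) {w : Phase n} (hw : resonantGenericity i0 α β w ≠ 0) :
    LinearIndependent ℝ (fun i => fderiv ℝ (resonantFamily c i0 α β i) w) := by
  have hgen := Finset.prod_ne_zero_iff.mp hw
  have hx : ∀ k, w.1 k ≠ 0 := fun k => left_ne_zero_of_mul (hgen k (Finset.mem_univ k))
  have hre : ∀ k, (zf i0 w ^ α k * zbf k w ^ β).re ≠ 0 := fun k =>
    right_ne_zero_of_mul (hgen k (Finset.mem_univ k))
  rw [Fintype.linearIndependent_iff]
  intro a ha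
  have happ : ∀ v : Phase n, a (.inl ()) * fderiv ℝ (fun w => ∑ j, c j * IR j w) w v +
      (∑ j : {j // j ≠ i0}, a (.inr (.inl j)) * fderiv ℝ (IR j.1) w v +
        ∑ j : {j // j ≠ i0}, a (.inr (.inr j)) *
          fderiv ℝ (fun w => (zf i0 w ^ α j.1 * zbf j.1 w ^ β).im) w v) = 0 := fun v => by
    simpa only [resonantFamily, Fintype.sum_sum_type, Finset.univ_unique, PUnit.default_eq_unit,
      Sum.elim_inl, Finset.sum_singleton, Sum.elim_inr, add_apply, smul_apply, smul_eq_mul,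
      sum_apply, zero_apply] using congrArg (fun T => T v) ha
  have hR : ∀ j, a (.inr (.inr j)) = 0 := by
    intro j
    have h := happ (rotField j.1 w)
    simp only [fderiv_sum_mul_IR_rotField, fderiv_IR_rotField,
      fderiv_im_monomial_rotField_of_ne (Ne.symm j.2), mul_zero, Finset.sum_const_zero, zero_add,
      mul_ite, ← Subtype.ext_iff, Finset.sum_ite_eq', Finset.mem_univ, if_true] at h
    exact (mul_eq_zero.mp h).resolve_right
      (neg_ne_zero.mpr (mul_ne_zero (Nat.cast_ne_zero.mpr hβ) (hre j.1)))
  have hF : a (.inl ()) = 0 := by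
    have h := happ (Pi.single i0 1, 0)
    simp only [fderiv_sum_mul_IR_apply, fderiv_IR_apply_single_zero, mul_ite, mul_zero,
      Finset.sum_ite_eq', Finset.mem_univ, if_true, hR, zero_mul, Finset.sum_const_zero,
      add_zero] at h
    rw [Finset.sum_eq_zero fun j _ => if_neg j.2, add_zero] at h
    exact (mul_eq_zero.mp h).resolve_right (mul_ne_zero hc (hx i0))
  have hI : ∀ j, a (.inr (.inl j)) = 0 := by
    intro j
    have h := happ (Pi.single j.1 1, 0)
    simp only [hF, fderiv_IR_apply_single_zero, mul_ite, mul_zero, ← Subtype.ext_iff,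
      Finset.sum_ite_eq', Finset.mem_univ, if_true, hR, zero_mul, Finset.sum_const_zero, add_zero,
      zero_add, mul_eq_zero] at h
    exact h.resolve_right (hx j.1)
  rintro (⟨⟩ | j | j)
  exacts [hF, hI j, hR j]

lemma analyticOnNhd_resonantGenericity (i0 : Fin n) (α : Fin n → ℕ) (β : ℕ) :
    AnalyticOnNhd ℝ (resonantGenericity i0 α β) Set.univ := fun w _ =>
  Finset.analyticAt_fun_prod _ fun k _ => ((xCLM k).analyticAt w).mul <|
    (reCLM.analyticAt _).comp <|
      (((zfCLM i0).analyticAt w).pow _).mul (((zbfCLM k).analyticAt w).pow _)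

lemma resonantGenericity_ne_zero (i0 : Fin n) (α : Fin n → ℕ) (β : ℕ) :
    resonantGenericity i0 α β (fun _ => Real.sqrt 2, 0) ≠ 0 := by
  have hz : ∀ j, zf j ((fun _ => Real.sqrt 2, 0) : Phase n) = 1 := fun j => by simp [zf]
  have hzb : ∀ j, zbf j ((fun _ => Real.sqrt 2, 0) : Phase n) = 1 := fun j => by simp [zbf]
  simp [resonantGenericity, hz, hzb]

lemma functionallyIndependent_resonantFamily {c : Fin n → ℝ} {i0 : Fin n} (hc : c i0 ≠ 0)
    (α : Fin n → ℕ) {β : ℕ} (hβ : β ≠ 0) :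
    FunctionallyIndependent (resonantFamily c i0 α β) := by
  have hΦ := analyticOnNhd_resonantGenericity i0 α β
  refine ⟨{w | resonantGenericity i0 α β w ≠ 0}, ?_,
    dense_setOf_ne_zero_of_analyticOnNhd hΦ (resonantGenericity_ne_zero i0 α β),
    fun w hw => linearIndependent_fderiv_resonantFamily hc α hβ hw⟩
  exact isOpen_ne_fun (continuousOn_univ.mp hΦ.continuousOn) continuous_const

end PhaseSpace

theorem statement2_general (n : ℕ) (l : Fin n → ℤ) (hl : ∀ j, 1 ≤ l j)
    (i0 : Fin n)
    (F1 : Phase n → ℝ) (hF1 : F1 = fun w => ∑ j : Fin n, (l j : ℝ) * IR j w)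
    (R1 : Fin n → Phase n → ℝ)
    (hR1 : R1 = fun j w => (zf i0 w ^ (l j).toNat * zbf j w ^ (l i0).toNat).im) :
    (∀ j : Fin n, j ≠ i0 → pbR F1 (fun w => IR j w) = 0) ∧
    (∀ j : Fin n, j ≠ i0 → pbR F1 (R1 j) = 0) ∧
    FunctionallyIndependent
      (Sum.elim (fun _ : Unit => F1)
        (Sum.elim (fun j : {j : Fin n // j ≠ i0} => fun w => IR j.1 w)
          (fun j : {j : Fin n // j ≠ i0} => R1 j.1))) := by
  subst hF1 hR1
  have hcast : ∀ j, (l j : ℝ) = (l j).toNat := fun j => by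
    exact_mod_cast (Int.toNat_of_nonneg (by linarith [hl j])).symm
  refine ⟨fun j _ => pbR_sum_mul_IR_IR _ j, fun j _ => pbR_sum_mul_IR_im_monomial _ i0 j _ _ ?_,
    functionallyIndependent_resonantFamily (α := fun j => (l j).toNat) ?_ ?_⟩
  · rw [hcast, hcast]; ring
  · exact_mod_cast (Int.one_pos.trans_le (hl i0)).ne'
  · have := hl i0; omega

/-- for `l_j ≥ 1`, the functions `(F₁, I₂, …, I_n, R_{12}, …, R_{1n})`,
with `R_{1j} = Im(z₁^{l_j} z̄_j^{l₁})`, are in involution with `F₁` and functionally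
independent: they form an integrable set with single central element `F₁`. -/
theorem statement2 (n : ℕ) (hn : 2 ≤ n) (l : Fin n → ℤ) (hl : ∀ j, 1 ≤ l j)
    (i0 : Fin n) (hi0 : (i0 : ℕ) = 0)
    (F1 : Phase n → ℝ) (hF1 : F1 = fun w => ∑ j : Fin n, (l j : ℝ) * IR j w)
    (R1 : Fin n → Phase n → ℝ)
    (hR1 : R1 = fun j w => (zf i0 w ^ (l j).toNat * zbf j w ^ (l i0).toNat).im) :
    (∀ j : Fin n, j ≠ i0 → pbR F1 (fun w => IR j w) = 0) ∧
    (∀ j : Fin n, j ≠ i0 → pbR F1 (R1 j) = 0) ∧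
    FunctionallyIndependent
      (Sum.elim (fun _ : Unit => F1)
        (Sum.elim (fun j : {j : Fin n // j ≠ i0} => fun w => IR j.1 w)
          (fun j : {j : Fin n // j ≠ i0} => R1 j.1))) :=
  statement2_general n l hl i0 F1 hF1 R1 hR1

end
end

section
/- For all group indices h, j = 1,…,u the following hold: {W_h, W_j} = 0; {W_h, W̄_j} = 4i δ_{hj} K_h; {W_h, K_j} = 2i δ_{hj} W_h; {W_h, P_{ab}} = 0 and {K_h, P_{ab}} = 0 for all p_{j−1} < a < b ≤ p_j; and W_h W̄_h = K_h² − P_{(h)}², where W̄_h denotes the complex conjugate of W_h. -/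
/-!
All the functions involved are polynomials in `w` and `w̄`, so their differentials are combinations
`∑ₖ (aₖ dwₖ + bₖ dw̄ₖ)` with `aₖ = ∂/∂wₖ`, `bₖ = ∂/∂w̄ₖ`. Since `dwₖ` takes the value `1/√2` on
`∂/∂xₖ` and `i εₖ/√2` on `∂/∂pₖ`, the bracket becomes
`{f, g} = i ∑ₖ εₖ (∂f/∂wₖ ∂g/∂w̄ₖ - ∂f/∂w̄ₖ ∂g/∂wₖ)`, and each bracket reduces to a coordinatewise
identity using `εₖ² = 1` and the disjointness of the blocks.

For the last identity, `K_h² - W_h W̄_h = ∑ᵢ ∑ⱼ εᵢ εⱼ (wᵢ w̄ᵢ wⱼ w̄ⱼ - wᵢ² w̄ⱼ²)`: the diagonal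
terms vanish and the terms `(i, j)` and `(j, i)` add up to `εᵢ εⱼ Pᵢⱼ²`.
-/

noncomputable section

open Complex

/-- `K_h = ∑_{p_{h-1} < i ≤ p_h} ε_i I_i` (complex-valued). Here the partition of
`{1,…,n}` (0-indexed: `{0,…,n-1}`) into `u` groups is given by the boundaries `pf`. -/
def Kc {n u : ℕ} (ε : Fin n → ℤ) (pf : Fin (u + 1) → ℕ) (h : Fin u) (w : Phase n) : ℂ :=
  ∑ i : Fin n,
    if pf h.castSucc ≤ (i : ℕ) ∧ (i : ℕ) < pf h.succ then (ε i : ℂ) * Iact i w else 0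

/-- `K_h` as a real-valued function. -/
def KR {n u : ℕ} (ε : Fin n → ℤ) (pf : Fin (u + 1) → ℕ) (h : Fin u) (w : Phase n) : ℝ :=
  ∑ i : Fin n,
    if pf h.castSucc ≤ (i : ℕ) ∧ (i : ℕ) < pf h.succ then (ε i : ℝ) * IR i w else 0

/-- `W_h = ∑_{p_{h-1} < i ≤ p_h} ε_i w_i²`. -/
def Wc {n u : ℕ} (ε : Fin n → ℤ) (pf : Fin (u + 1) → ℕ) (h : Fin u) (w : Phase n) : ℂ :=
  ∑ i : Fin n,
    if pf h.castSucc ≤ (i : ℕ) ∧ (i : ℕ) < pf h.succ then (ε i : ℂ) * wfun ε i w ^ 2 else 0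

/-- `W̄_h`, the complex conjugate of `W_h`. -/
def Wbc {n u : ℕ} (ε : Fin n → ℤ) (pf : Fin (u + 1) → ℕ) (h : Fin u) (w : Phase n) : ℂ :=
  ∑ i : Fin n,
    if pf h.castSucc ≤ (i : ℕ) ∧ (i : ℕ) < pf h.succ then (ε i : ℂ) * wbfun ε i w ^ 2 else 0

/-- `P_{(h)}² = ∑_{p_{h-1} < i < j ≤ p_h} ε_i ε_j P_{ij}²`. -/
def Psqg {n u : ℕ} (ε : Fin n → ℤ) (pf : Fin (u + 1) → ℕ) (h : Fin u) (w : Phase n) : ℂ :=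
  ∑ i : Fin n, ∑ j : Fin n,
    if pf h.castSucc ≤ (i : ℕ) ∧ i < j ∧ (j : ℕ) < pf h.succ then
      ((ε i * ε j : ℤ) : ℂ) * Pf ε i j w ^ 2
    else 0

/-- `R_m = ∏_h Ω_h^{m_h}`, with `Ω_h^{m_h} = W_h^{m_h}` for `m_h ≥ 0` and
`Ω_h^{m_h} = W̄_h^{−m_h}` for `m_h < 0`. -/
def RWc {n u : ℕ} (ε : Fin n → ℤ) (pf : Fin (u + 1) → ℕ) (m : Fin u → ℤ) (w : Phase n) : ℂ :=
  ∏ h : Fin u,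
    if 0 ≤ m h then Wc ε pf h w ^ (m h).toNat else Wbc ε pf h w ^ (-(m h)).toNat

section Differentials

variable {n : ℕ}

def dz (i : Fin n) : Phase n →L[ℝ] ℂ :=
  ((Real.sqrt 2 : ℝ) : ℂ)⁻¹ •
    (ofRealCLM ∘L (ContinuousLinearMap.proj i ∘L ContinuousLinearMap.fst ℝ _ _) +
      I • ofRealCLM ∘L (ContinuousLinearMap.proj i ∘L ContinuousLinearMap.snd ℝ _ _))

def dzb (i : Fin n) : Phase n →L[ℝ] ℂ :=
  ((Real.sqrt 2 : ℝ) : ℂ)⁻¹ •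
    (ofRealCLM ∘L (ContinuousLinearMap.proj i ∘L ContinuousLinearMap.fst ℝ _ _) -
      I • ofRealCLM ∘L (ContinuousLinearMap.proj i ∘L ContinuousLinearMap.snd ℝ _ _))

lemma coe_dz (i : Fin n) : ⇑(dz i) = zf i := by
  ext v; simp [dz, zf, div_eq_inv_mul, mul_add]

lemma coe_dzb (i : Fin n) : ⇑(dzb i) = zbf i := by
  ext v; simp [dzb, zbf, div_eq_inv_mul, mul_sub]

def dw (ε : Fin n → ℤ) (i : Fin n) : Phase n →L[ℝ] ℂ := if ε i = 1 then dz i else dzb i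

def dwb (ε : Fin n → ℤ) (i : Fin n) : Phase n →L[ℝ] ℂ := if ε i = 1 then dzb i else dz i

lemma coe_dw (ε : Fin n → ℤ) (i : Fin n) : ⇑(dw ε i) = wfun ε i := by
  ext v; unfold dw wfun; split_ifs <;> simp [coe_dz, coe_dzb]

lemma coe_dwb (ε : Fin n → ℤ) (i : Fin n) : ⇑(dwb ε i) = wbfun ε i := by
  ext v; unfold dwb wbfun; split_ifs <;> simp [coe_dz, coe_dzb]

lemma hasFDerivAt_wfun (ε : Fin n → ℤ) (i : Fin n) (w : Phase n) :
    HasFDerivAt (wfun ε i) (dw ε i) w :=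
  coe_dw ε i ▸ (dw ε i).hasFDerivAt

lemma hasFDerivAt_wbfun (ε : Fin n → ℤ) (i : Fin n) (w : Phase n) :
    HasFDerivAt (wbfun ε i) (dwb ε i) w :=
  coe_dwb ε i ▸ (dwb ε i).hasFDerivAt

lemma wfun_single_fst (ε : Fin n → ℤ) (i j : Fin n) :
    wfun ε i (Pi.single j 1, 0) = if i = j then ((Real.sqrt 2 : ℝ) : ℂ)⁻¹ else 0 := by
  unfold wfun; split_ifs <;> simp_all [zf, zbf]

lemma wbfun_single_fst (ε : Fin n → ℤ) (i j : Fin n) :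
    wbfun ε i (Pi.single j 1, 0) = if i = j then ((Real.sqrt 2 : ℝ) : ℂ)⁻¹ else 0 := by
  unfold wbfun; split_ifs <;> simp_all [zf, zbf]

lemma wfun_single_snd {ε : Fin n → ℤ} {i : Fin n} (hε : ε i = 1 ∨ ε i = -1) (j : Fin n) :
    wfun ε i (0, Pi.single j 1) =
      if i = j then ε i * I * ((Real.sqrt 2 : ℝ) : ℂ)⁻¹ else 0 := by
  rcases hε with hε | hε <;> unfold wfun <;> split_ifs <;> simp_all [zf, zbf] <;> ring

lemma wbfun_single_snd {ε : Fin n → ℤ} {i : Fin n} (hε : ε i = 1 ∨ ε i = -1) (j : Fin n) :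
    wbfun ε i (0, Pi.single j 1) =
      if i = j then -(ε i * I * ((Real.sqrt 2 : ℝ) : ℂ)⁻¹) else 0 := by
  rcases hε with hε | hε <;> unfold wbfun <;> split_ifs <;> simp_all [zf, zbf] <;> ring

end Differentials

section PoissonBracket

variable {n : ℕ} (ε : Fin n → ℤ)

def wForm (a b : Fin n → ℂ) : Phase n →L[ℝ] ℂ := ∑ k, (a k • dw ε k + b k • dwb ε k)

lemma wForm_single_fst (a b : Fin n → ℂ) (j : Fin n) :
    wForm ε a b (Pi.single j 1, 0) = (a j + b j) * ((Real.sqrt 2 : ℝ) : ℂ)⁻¹ := by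
  simp [wForm, coe_dw, coe_dwb, wfun_single_fst, wbfun_single_fst, Finset.sum_add_distrib]
  ring

variable {ε}

lemma wForm_single_snd (hε : ∀ i, ε i = 1 ∨ ε i = -1) (a b : Fin n → ℂ) (j : Fin n) :
    wForm ε a b (0, Pi.single j 1) = ε j * I * (a j - b j) * ((Real.sqrt 2 : ℝ) : ℂ)⁻¹ := by
  simp [wForm, coe_dw, coe_dwb, wfun_single_snd (hε _), wbfun_single_snd (hε _),
    Finset.sum_add_distrib]
  ring

lemma inv_sqrt_two_mul_self : ((Real.sqrt 2 : ℝ) : ℂ)⁻¹ * ((Real.sqrt 2 : ℝ) : ℂ)⁻¹ = 2⁻¹ := by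
  rw [← mul_inv, ← ofReal_mul, Real.mul_self_sqrt zero_le_two, ofReal_ofNat]

theorem pb_apply_of_hasFDerivAt (hε : ∀ i, ε i = 1 ∨ ε i = -1) {f g : Phase n → ℂ}
    {a b c d : Fin n → ℂ} {w : Phase n} (hf : HasFDerivAt f (wForm ε a b) w)
    (hg : HasFDerivAt g (wForm ε c d) w) :
    pb f g w = I * ∑ k, ε k * (a k * d k - b k * c k) := by
  simp only [pb, hf.fderiv, hg.fderiv, wForm_single_fst, wForm_single_snd hε, Finset.mul_sum]
  refine Finset.sum_congr rfl fun k _ => ?_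
  linear_combination (2 * ε k * I * (a k * d k - b k * c k)) * inv_sqrt_two_mul_self

end PoissonBracket

lemma HasFDerivAt.ite_zero {𝕜 E F : Type*} [NontriviallyNormedField 𝕜]
    [NormedAddCommGroup E] [NormedSpace 𝕜 E] [NormedAddCommGroup F] [NormedSpace 𝕜 F]
    {f : E → F} {f' : E →L[𝕜] F} {x : E} (p : Prop) [Decidable p] (hf : HasFDerivAt f f' x) :
    HasFDerivAt (fun y => if p then f y else 0) (if p then f' else 0) x := by
  split_ifs
  exacts [hf, hasFDerivAt_const 0 x]

section Derivatives

variable {n u : ℕ} (ε : Fin n → ℤ) (pf : Fin (u + 1) → ℕ) (h : Fin u) (w : Phase n)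

lemma hasFDerivAt_Wc :
    HasFDerivAt (Wc ε pf h)
      (wForm ε (fun k => if pf h.castSucc ≤ (k : ℕ) ∧ (k : ℕ) < pf h.succ then
        2 * ε k * wfun ε k w else 0) 0) w := by
  refine (HasFDerivAt.fun_sum (u := Finset.univ) fun i _ =>
    (((hasFDerivAt_wfun ε i w).pow 2).const_mul (ε i : ℂ)).ite_zero
      (pf h.castSucc ≤ (i : ℕ) ∧ (i : ℕ) < pf h.succ)).congr_fderiv ?_
  simp only [wForm, Pi.zero_apply]
  refine Finset.sum_congr rfl fun k _ => ?_
  split_ifs <;> module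

lemma hasFDerivAt_Wbc :
    HasFDerivAt (Wbc ε pf h)
      (wForm ε 0 (fun k => if pf h.castSucc ≤ (k : ℕ) ∧ (k : ℕ) < pf h.succ then
        2 * ε k * wbfun ε k w else 0)) w := by
  refine (HasFDerivAt.fun_sum (u := Finset.univ) fun i _ =>
    (((hasFDerivAt_wbfun ε i w).pow 2).const_mul (ε i : ℂ)).ite_zero
      (pf h.castSucc ≤ (i : ℕ) ∧ (i : ℕ) < pf h.succ)).congr_fderiv ?_
  simp only [wForm, Pi.zero_apply]
  refine Finset.sum_congr rfl fun k _ => ?_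
  split_ifs <;> module

lemma wfun_mul_wbfun (i : Fin n) : wfun ε i w * wbfun ε i w = Iact i w := by
  unfold wfun wbfun Iact; split_ifs <;> ring

lemma hasFDerivAt_Kc :
    HasFDerivAt (Kc ε pf h)
      (wForm ε
        (fun k => if pf h.castSucc ≤ (k : ℕ) ∧ (k : ℕ) < pf h.succ then
          ε k * wbfun ε k w else 0)
        (fun k => if pf h.castSucc ≤ (k : ℕ) ∧ (k : ℕ) < pf h.succ then
          ε k * wfun ε k w else 0)) w := by
  have hI (i : Fin n) :
      HasFDerivAt (Iact i) (wfun ε i w • dwb ε i + wbfun ε i w • dw ε i) w := by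
    rw [show Iact i = fun w => wfun ε i w * wbfun ε i w from
      funext fun w => (wfun_mul_wbfun ε w i).symm]
    exact (hasFDerivAt_wfun ε i w).mul (hasFDerivAt_wbfun ε i w)
  refine (HasFDerivAt.fun_sum (u := Finset.univ) fun i _ =>
    ((hI i).const_mul (ε i : ℂ)).ite_zero
      (pf h.castSucc ≤ (i : ℕ) ∧ (i : ℕ) < pf h.succ)).congr_fderiv ?_
  simp only [wForm]
  refine Finset.sum_congr rfl fun k _ => ?_
  split_ifs <;> module

lemma hasFDerivAt_Pf (a b : Fin n) :
    HasFDerivAt (Pf ε a b)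
      (wForm ε
        (fun k => I * ((if k = a then wbfun ε b w else 0) - (if k = b then wbfun ε a w else 0)))
        (fun k => I * ((if k = b then wfun ε a w else 0) - (if k = a then wfun ε b w else 0))))
      w := by
  refine ((((hasFDerivAt_wfun ε a w).mul (hasFDerivAt_wbfun ε b w)).sub
    ((hasFDerivAt_wfun ε b w).mul (hasFDerivAt_wbfun ε a w))).const_mul I).congr_fderiv ?_
  refine ContinuousLinearMap.ext fun v => ?_
  simp only [wForm, sum_apply, add_apply, sub_apply, smul_apply, smul_eq_mul, mul_sub, sub_mul,
    mul_ite, ite_mul, mul_zero, zero_mul, Finset.sum_add_distrib, Finset.sum_sub_distrib,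
    Finset.sum_ite_eq', Finset.mem_univ, if_true]
  ring

end Derivatives

lemma mem_block_iff {u : ℕ} {pf : Fin (u + 1) → ℕ} (hpf : Monotone pf) {h j : Fin u} {m : ℕ}
    (hj : pf j.castSucc ≤ m ∧ m < pf j.succ) : pf h.castSucc ≤ m ∧ m < pf h.succ ↔ h = j := by
  refine ⟨fun hh => ?_, fun e => e ▸ hj⟩
  by_contra hne
  rcases lt_or_gt_of_ne hne with hlt | hlt
  · have := hpf (Fin.succ_le_castSucc_iff.2 hlt); omega
  · have := hpf (Fin.succ_le_castSucc_iff.2 hlt); omega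

lemma intCast_sq_eq_one {e : ℤ} (he : e = 1 ∨ e = -1) : (e : ℂ) ^ 2 = 1 := by
  rcases he with rfl | rfl <;> norm_num

section Brackets

variable {n u : ℕ} {ε : Fin n → ℤ} (pf : Fin (u + 1) → ℕ)

lemma pb_Wc_Wc (hε : ∀ i, ε i = 1 ∨ ε i = -1) (h j : Fin u) :
    pb (Wc ε pf h) (Wc ε pf j) = 0 := by
  funext w
  rw [pb_apply_of_hasFDerivAt hε (hasFDerivAt_Wc ε pf h w) (hasFDerivAt_Wc ε pf j w)]
  simp

variable {pf}

lemma ite_block_mul_ite_block (hpf : Monotone pf) (h j : Fin u) (k : Fin n) (x y : ℂ) :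
    (if pf h.castSucc ≤ (k : ℕ) ∧ (k : ℕ) < pf h.succ then x else 0) *
        (if pf j.castSucc ≤ (k : ℕ) ∧ (k : ℕ) < pf j.succ then y else 0) =
      (if h = j then 1 else 0) *
        (if pf h.castSucc ≤ (k : ℕ) ∧ (k : ℕ) < pf h.succ then x * y else 0) := by
  by_cases hk : pf h.castSucc ≤ (k : ℕ) ∧ (k : ℕ) < pf h.succ
  · simp only [mem_block_iff hpf hk, eq_comm (a := j)]
    split_ifs <;> ring
  · simp [hk]

lemma pb_Wc_Wbc (hpf : Monotone pf) (hε : ∀ i, ε i = 1 ∨ ε i = -1) (h j : Fin u) :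
    pb (Wc ε pf h) (Wbc ε pf j) = fun w => 4 * I * (if h = j then 1 else 0) * Kc ε pf h w := by
  funext w
  rw [pb_apply_of_hasFDerivAt hε (hasFDerivAt_Wc ε pf h w) (hasFDerivAt_Wbc ε pf j w), Kc,
    Finset.mul_sum, Finset.mul_sum]
  refine Finset.sum_congr rfl fun k _ => ?_
  simp only [Pi.zero_apply, mul_zero, sub_zero, ite_block_mul_ite_block hpf,
    ← wfun_mul_wbfun ε w]
  split_ifs
  · linear_combination (4 * I * ε k * wfun ε k w * wbfun ε k w) * intCast_sq_eq_one (hε k)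
  all_goals ring

lemma pb_Wc_Kc (hpf : Monotone pf) (hε : ∀ i, ε i = 1 ∨ ε i = -1) (h j : Fin u) :
    pb (Wc ε pf h) (Kc ε pf j) = fun w => 2 * I * (if h = j then 1 else 0) * Wc ε pf h w := by
  funext w
  rw [pb_apply_of_hasFDerivAt hε (hasFDerivAt_Wc ε pf h w) (hasFDerivAt_Kc ε pf j w), Wc,
    Finset.mul_sum, Finset.mul_sum]
  refine Finset.sum_congr rfl fun k _ => ?_
  simp only [Pi.zero_apply, zero_mul, sub_zero, ite_block_mul_ite_block hpf]
  split_ifs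
  · linear_combination (2 * I * ε k * wfun ε k w ^ 2) * intCast_sq_eq_one (hε k)
  all_goals ring

lemma pb_Wc_Pf (hpf : Monotone pf) (hε : ∀ i, ε i = 1 ∨ ε i = -1) (h j : Fin u)
    {a b : Fin n} (ha : pf j.castSucc ≤ (a : ℕ)) (hab : a < b) (hb : (b : ℕ) < pf j.succ) :
    pb (Wc ε pf h) (Pf ε a b) = 0 := by
  have hab' : (a : ℕ) < b := hab
  funext w
  rw [pb_apply_of_hasFDerivAt hε (hasFDerivAt_Wc ε pf h w) (hasFDerivAt_Pf ε w a b)]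
  simp only [Pi.zero_apply, zero_mul, sub_zero, mul_sub, mul_ite, mul_zero,
    Finset.sum_sub_distrib, Finset.sum_ite_eq', Finset.mem_univ, if_true,
    mem_block_iff hpf ⟨ha, hab'.trans hb⟩, mem_block_iff hpf ⟨ha.trans hab'.le, hb⟩]
  split_ifs
  · linear_combination (2 * I ^ 2 * wfun ε a w * wfun ε b w) *
      (intCast_sq_eq_one (hε b) - intCast_sq_eq_one (hε a))
  · ring

lemma pb_Kc_Pf (hpf : Monotone pf) (hε : ∀ i, ε i = 1 ∨ ε i = -1) (h j : Fin u)
    {a b : Fin n} (ha : pf j.castSucc ≤ (a : ℕ)) (hab : a < b) (hb : (b : ℕ) < pf j.succ) :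
    pb (Kc ε pf h) (Pf ε a b) = 0 := by
  have hab' : (a : ℕ) < b := hab
  funext w
  rw [pb_apply_of_hasFDerivAt hε (hasFDerivAt_Kc ε pf h w) (hasFDerivAt_Pf ε w a b)]
  simp only [Pi.zero_apply, mul_sub, mul_ite, mul_zero, Finset.sum_sub_distrib,
    Finset.sum_ite_eq', Finset.mem_univ, if_true, mem_block_iff hpf ⟨ha, hab'.trans hb⟩,
    mem_block_iff hpf ⟨ha.trans hab'.le, hb⟩]
  split_ifs
  · linear_combination (I ^ 2 * (wbfun ε b w * wfun ε a w + wfun ε b w * wbfun ε a w)) *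
      (intCast_sq_eq_one (hε b) - intCast_sq_eq_one (hε a))
  · ring

end Brackets

theorem Finset.sum_sum_eq_sum_diag_add_sum_lt {ι M : Type*} [LinearOrder ι] [AddCommMonoid M]
    (s : Finset ι) (f : ι → ι → M) :
    ∑ i ∈ s, ∑ j ∈ s, f i j =
      ∑ i ∈ s, f i i + ∑ i ∈ s, ∑ j ∈ s, if i < j then f i j + f j i else 0 := by
  have htri (i j : ι) : f i j =
      (if i = j then f i j else 0) +
        ((if i < j then f i j else 0) + if j < i then f i j else 0) := by
    rcases lt_trichotomy i j with hij | rfl | hij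
    · simp [hij, hij.ne, hij.not_gt]
    · simp
    · simp [hij, hij.ne', hij.not_gt]
  have hswap : ∑ i ∈ s, ∑ j ∈ s, (if j < i then f i j else 0) =
      ∑ i ∈ s, ∑ j ∈ s, if i < j then f j i else 0 := Finset.sum_comm
  have hdiag : ∑ i ∈ s, ∑ j ∈ s, (if i = j then f i j else 0) = ∑ i ∈ s, f i i :=
    Finset.sum_congr rfl fun i hi => by rw [Finset.sum_ite_eq, if_pos hi]
  calc ∑ i ∈ s, ∑ j ∈ s, f i j
      = ∑ i ∈ s, ∑ j ∈ s, (if i = j then f i j else 0) +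
          (∑ i ∈ s, ∑ j ∈ s, (if i < j then f i j else 0) +
            ∑ i ∈ s, ∑ j ∈ s, if j < i then f i j else 0) := by
        simp only [← Finset.sum_add_distrib]
        exact Finset.sum_congr rfl fun i _ => Finset.sum_congr rfl fun j _ => htri i j
    _ = _ := by
        rw [hdiag, hswap]
        simp only [← Finset.sum_add_distrib, ite_add_zero]

lemma Wc_mul_Wbc {n u : ℕ} (ε : Fin n → ℤ) (pf : Fin (u + 1) → ℕ) (h : Fin u) (w : Phase n) :
    Wc ε pf h w * Wbc ε pf h w = Kc ε pf h w ^ 2 - Psqg ε pf h w := by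
  set S := Finset.univ.filter fun i : Fin n => pf h.castSucc ≤ (i : ℕ) ∧ (i : ℕ) < pf h.succ
  have hW : Wc ε pf h w = ∑ i ∈ S, ε i * wfun ε i w ^ 2 := (Finset.sum_filter _ _).symm
  have hWb : Wbc ε pf h w = ∑ i ∈ S, ε i * wbfun ε i w ^ 2 := (Finset.sum_filter _ _).symm
  have hK : Kc ε pf h w = ∑ i ∈ S, ε i * (wfun ε i w * wbfun ε i w) := by
    simp only [Kc, ← wfun_mul_wbfun ε w, S, Finset.sum_filter]
  have hP : Psqg ε pf h w =
      ∑ i ∈ S, ∑ j ∈ S, if i < j then ((ε i * ε j : ℤ) : ℂ) * Pf ε i j w ^ 2 else 0 := by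
    have hcond (i j : Fin n) :
        (pf h.castSucc ≤ (i : ℕ) ∧ i < j ∧ (j : ℕ) < pf h.succ) ↔
          (pf h.castSucc ≤ (i : ℕ) ∧ (i : ℕ) < pf h.succ) ∧
            (pf h.castSucc ≤ (j : ℕ) ∧ (j : ℕ) < pf h.succ) ∧ i < j := by
      rw [Fin.lt_def]; omega
    simp only [Psqg, S, Finset.sum_filter, hcond, ite_and]
    refine Finset.sum_congr rfl fun i _ => ?_
    split_ifs <;> simp
  have hpairs : ∑ i ∈ S, ∑ j ∈ S,
      (ε i * (wfun ε i w * wbfun ε i w) * (ε j * (wfun ε j w * wbfun ε j w)) -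
        ε i * wfun ε i w ^ 2 * (ε j * wbfun ε j w ^ 2)) =
      ∑ i ∈ S, ∑ j ∈ S, if i < j then ((ε i * ε j : ℤ) : ℂ) * Pf ε i j w ^ 2 else 0 := by
    rw [Finset.sum_sum_eq_sum_diag_add_sum_lt, Finset.sum_eq_zero fun i _ => by ring, zero_add]
    refine Finset.sum_congr rfl fun i _ => Finset.sum_congr rfl fun j _ => ?_
    split_ifs
    · simp only [Pf]
      push_cast
      linear_combination
        (-(ε i * ε j) * (wfun ε i w * wbfun ε j w - wfun ε j w * wbfun ε i w) ^ 2 : ℂ) * I_sq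
    · rfl
  rw [hW, hWb, hK, hP, sq, Finset.sum_mul_sum, Finset.sum_mul_sum, ← hpairs]
  simp only [Finset.sum_sub_distrib]
  ring

theorem statement7_general (n u : ℕ)
    (pf : Fin (u + 1) → ℕ) (hpf : StrictMono pf)
    (ε : Fin n → ℤ) (hε : ∀ i, ε i = 1 ∨ ε i = -1) :
    ∀ h j : Fin u,
      pb (Wc ε pf h) (Wc ε pf j) = 0 ∧
      (pb (Wc ε pf h) (Wbc ε pf j) =
        fun w => 4 * Complex.I * (if h = j then 1 else 0) * Kc ε pf h w) ∧
      (pb (Wc ε pf h) (Kc ε pf j) =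
        fun w => 2 * Complex.I * (if h = j then 1 else 0) * Wc ε pf h w) ∧
      (∀ a b : Fin n, pf j.castSucc ≤ (a : ℕ) → a < b → (b : ℕ) < pf j.succ →
        pb (Wc ε pf h) (Pf ε a b) = 0 ∧ pb (Kc ε pf h) (Pf ε a b) = 0) ∧
      (∀ w : Phase n, Wc ε pf h w * Wbc ε pf h w = Kc ε pf h w ^ 2 - Psqg ε pf h w) := by
  intro h j
  have hmono := hpf.monotone
  exact ⟨pb_Wc_Wc pf hε h j, pb_Wc_Wbc hmono hε h j, pb_Wc_Kc hmono hε h j,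
    fun _ _ ha hab hb => ⟨pb_Wc_Pf hmono hε h j ha hab hb, pb_Kc_Pf hmono hε h j ha hab hb⟩,
    Wc_mul_Wbc ε pf h⟩

/-- `{W_h, W_j} = 0`, `{W_h, W̄_j} = 4i δ_{hj} K_h`,
`{W_h, K_j} = 2i δ_{hj} W_h`, `{W_h, P_{ab}} = {K_h, P_{ab}} = 0` for momenta `P_{ab}`
within a group, and `W_h W̄_h = K_h² − P_{(h)}²`. -/
theorem statement7 (n u : ℕ)
    (pf : Fin (u + 1) → ℕ) (hpf : StrictMono pf) (hpf0 : pf 0 = 0)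
    (hpfn : pf (Fin.last u) = n)
    (ε : Fin n → ℤ) (hε : ∀ i, ε i = 1 ∨ ε i = -1) :
    ∀ h j : Fin u,
      pb (Wc ε pf h) (Wc ε pf j) = 0 ∧
      (pb (Wc ε pf h) (Wbc ε pf j) =
        fun w => 4 * Complex.I * (if h = j then 1 else 0) * Kc ε pf h w) ∧
      (pb (Wc ε pf h) (Kc ε pf j) =
        fun w => 2 * Complex.I * (if h = j then 1 else 0) * Wc ε pf h w) ∧
      (∀ a b : Fin n, pf j.castSucc ≤ (a : ℕ) → a < b → (b : ℕ) < pf j.succ →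
        pb (Wc ε pf h) (Pf ε a b) = 0 ∧ pb (Kc ε pf h) (Pf ε a b) = 0) ∧
      (∀ w : Phase n, Wc ε pf h w * Wbc ε pf h w = Kc ε pf h w ^ 2 - Psqg ε pf h w) :=
  statement7_general n u pf hpf ε hε

end
end

section
/- Suppose for each h = 1,…,u an integer z_h is fixed (z_h = 0 if q_h = 1, and 1 ≤ z_h ≤ q_h − 1 otherwise) together with tuples Z_h of z_h functions and L_h of 2(q_h − z_h − 1) functions, each a polynomial of degree at most 2 in the momenta (P_{ij}, p_{h−1} < i < j ≤ p_h), such that every element of Z_h Poisson-commutes with every element of (Z_h, L_h) (with Z_h = L_h = ∅ when q_h = 1). Let 1 ≤ k' ≤ u, let r^{(1)} = s, r^{(2)}, …, r^{(u)} ∈ ℤ^u be linearly independent, and let m^{(1)}, …, m^{(u−k')} ∈ ℤ^u be linearly independent with r^{(h)} · m^{(j)} = 0 for all h ≤ k' and j ≤ u−k'. Consider the tuple F = (J_{r^{(1)}}, …, J_{r^{(k')}}, Z_1, …, Z_u; J_{r^{(k'+1)}}, …, J_{r^{(u)}}, Im R_{m^{(1)}}, …, Im R_{m^{(u−k')}},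 L_1, …, L_u). Then F consists of 2n − k functions, where k = k' + Σ_h z_h, and each of the k central elements (J_{r^{(1)}}, …, J_{r^{(k')}}, Z_1, …, Z_u) Poisson-commutes with every element of F. -/
noncomputable section

open Complex

/-- A real function on phase space which is a polynomial of degree at most 2 in the
momenta `P_{ij}` of the `h`-th group, i.e. with `p_{h-1} < i < j ≤ p_h`. -/
def IsPolyInGrpMomenta {n u : ℕ} (ε : Fin n → ℤ) (pf : Fin (u + 1) → ℕ) (h : Fin u)
    (f : Phase n → ℝ) : Prop :=
  ∃ Q : MvPolynomial {ij : Fin n × Fin n //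
      pf h.castSucc ≤ (ij.1 : ℕ) ∧ ij.1 < ij.2 ∧ (ij.2 : ℕ) < pf h.succ} ℝ,
    Q.totalDegree ≤ 2 ∧
    f = fun w => MvPolynomial.eval (fun ij => PfR ε ij.1.1 ij.1.2 w) Q

open ComplexConjugate

/-!
In the complex coordinates `w_i, w̄_i` every bracket reduces to the constant ones
`{w_a, w_b} = 0` and `{w̄_a, w_b} = -i ε_a δ_ab`: since `ε_a = ±1`, `w_a = (x_a + i ε_a p_a)/√2`.
The complexified `J_r` is a combination of the actions `I_i = w_i w̄_i`, so `{J_r, ·}` acts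
diagonally: `w_i` and `w̄_i` are eigenfunctions with eigenvalues `∓ i r_h` for `i` in the `h`-th
block. By the Leibniz rule the momenta `P_ij` of a block then have eigenvalue `0`, `W_h` and `W̄_h`
have `∓ 2i r_h`, and `R_m` has `-2i (r · m)`, which vanishes by orthogonality. A momentum `P_ab`
moves `w_c` only for `c ∈ {a, b}`, so it commutes with the momenta of the other blocks, and with
every `W_h` because it rotates `(w_a, w_b)` preserving `ε_a w_a² + ε_b w_b²`. Polynomials in
functions commuting with `f` commute with `f`, and the bracket with a real function commutes with
complex conjugation, which takes care of `W̄_h`, `Im R_m` and the passage to real functions.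
-/

section Bracket

variable {n : ℕ} {f f' g h : Phase n → ℂ}

theorem pb_comm (f g : Phase n → ℂ) : pb f g = -pb g f := by
  ext w
  simp only [pb, Pi.neg_apply, ← Finset.sum_neg_distrib]
  exact Finset.sum_congr rfl fun _ _ => by ring

theorem pb_eq_zero_comm : pb f g = 0 ↔ pb g f = 0 := by
  rw [pb_comm, neg_eq_zero]

theorem pbR_comm (f g : Phase n → ℝ) : pbR f g = -pbR g f := by
  ext w
  simp only [pbR, Pi.neg_apply, ← Finset.sum_neg_distrib]
  exact Finset.sum_congr rfl fun _ _ => by ring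

theorem pb_const_right (f : Phase n → ℂ) (c : ℂ) : pb f (fun _ => c) = 0 := by
  ext w
  simp [pb]

theorem pb_add_right (hg : Differentiable ℝ g) (hh : Differentiable ℝ h) :
    pb f (g + h) = pb f g + pb f h := by
  ext w
  simp only [pb, fderiv_add (hg w) (hh w), add_apply, Pi.add_apply,
    ← Finset.sum_add_distrib]
  exact Finset.sum_congr rfl fun _ _ => by ring

theorem pb_smul_right (hg : Differentiable ℝ g) (c : ℂ) : pb f (c • g) = c • pb f g := by
  ext w
  simp only [pb, fderiv_const_smul (hg w) c, smul_apply, smul_eq_mul,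
    Pi.smul_apply, Finset.mul_sum]
  exact Finset.sum_congr rfl fun _ _ => by ring

theorem pb_mul_right (hg : Differentiable ℝ g) (hh : Differentiable ℝ h) :
    pb f (g * h) = g * pb f h + h * pb f g := by
  ext w
  simp only [pb, fderiv_mul (hg w) (hh w), add_apply,
    smul_apply, smul_eq_mul, Pi.add_apply, Pi.mul_apply, Finset.mul_sum,
    ← Finset.sum_add_distrib]
  exact Finset.sum_congr rfl fun _ _ => by ring

theorem pb_sub_right (hg : Differentiable ℝ g) (hh : Differentiable ℝ h) :
    pb f (g - h) = pb f g - pb f h := by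
  ext w
  simp only [pb, fderiv_sub (hg w) (hh w), sub_apply, Pi.sub_apply, ← Finset.sum_sub_distrib]
  exact Finset.sum_congr rfl fun _ _ => by ring

theorem pb_finset_sum_right {ι : Type*} (s : Finset ι) {G : ι → Phase n → ℂ}
    (hG : ∀ i ∈ s, Differentiable ℝ (G i)) : pb f (∑ i ∈ s, G i) = ∑ i ∈ s, pb f (G i) := by
  classical
  induction s using Finset.induction_on with
  | empty => exact pb_const_right f 0
  | insert a s ha ih =>
    rw [Finset.sum_insert ha, Finset.sum_insert ha, pb_add_right (hG a (s.mem_insert_self a))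
      (Differentiable.sum fun i hi => hG i (Finset.mem_insert_of_mem hi)),
      ih fun i hi => hG i (Finset.mem_insert_of_mem hi)]

theorem pb_add_left (hf : Differentiable ℝ f) (hf' : Differentiable ℝ f') :
    pb (f + f') g = pb f g + pb f' g := by
  rw [pb_comm, pb_add_right hf hf', pb_comm g f, pb_comm g f', neg_add, neg_neg, neg_neg]

theorem pb_sub_left (hf : Differentiable ℝ f) (hf' : Differentiable ℝ f') :
    pb (f - f') g = pb f g - pb f' g := by
  rw [pb_comm, pb_sub_right hf hf', pb_comm g f, pb_comm g f']
  abel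

theorem pb_smul_left (hf : Differentiable ℝ f) (c : ℂ) : pb (c • f) g = c • pb f g := by
  rw [pb_comm, pb_smul_right hf, pb_comm g f, smul_neg, neg_neg]

theorem pb_mul_left (hf : Differentiable ℝ f) (hf' : Differentiable ℝ f') :
    pb (f * f') g = f * pb f' g + f' * pb f g := by
  rw [pb_comm, pb_mul_right hf hf', pb_comm g f, pb_comm g f']
  ring

end Bracket

section Real

variable {n : ℕ} {f g : Phase n → ℝ}

theorem fderiv_ofReal_comp (f : Phase n → ℝ) (w : Phase n) :
    fderiv ℝ (ofReal ∘ f) w = ofRealCLM.comp (fderiv ℝ f w) := by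
  by_cases hf : DifferentiableAt ℝ f w
  · exact (ofRealCLM.hasFDerivAt.comp w hf.hasFDerivAt).fderiv
  · have hf' : ¬DifferentiableAt ℝ (ofReal ∘ f) w := fun h' =>
      hf (by simpa [Function.comp_def] using reCLM.differentiableAt.comp w h')
    rw [fderiv_zero_of_not_differentiableAt hf, fderiv_zero_of_not_differentiableAt hf',
      ContinuousLinearMap.comp_zero]

theorem pb_ofReal_comp (f g : Phase n → ℝ) : pb (ofReal ∘ f) (ofReal ∘ g) = ofReal ∘ pbR f g := by
  ext w
  simp only [pb, pbR, fderiv_ofReal_comp, ContinuousLinearMap.comp_apply, ofRealCLM_apply,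
    Function.comp_apply]
  push_cast
  rfl

theorem pbR_eq_zero_of_pb (h : pb (ofReal ∘ f) (ofReal ∘ g) = 0) : pbR f g = 0 := by
  ext w
  simpa [pb_ofReal_comp] using congrFun h w

theorem fderiv_conj_comp (F : Phase n → ℂ) (w : Phase n) :
    fderiv ℝ (conj ∘ F) w = (conjCLE : ℂ →L[ℝ] ℂ).comp (fderiv ℝ F w) :=
  conjCLE.comp_fderiv

theorem pb_conj_comp (F G : Phase n → ℂ) : pb (conj ∘ F) (conj ∘ G) = conj ∘ pb F G := by
  ext w
  simp only [pb, fderiv_conj_comp, ContinuousLinearMap.comp_apply, Function.comp_apply,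
    ContinuousLinearEquiv.coe_coe, conjCLE_apply, map_sum, map_sub, map_mul]

theorem pb_ofReal_comp_conj_comp (f : Phase n → ℝ) (G : Phase n → ℂ) :
    pb (ofReal ∘ f) (conj ∘ G) = conj ∘ pb (ofReal ∘ f) G := by
  have hf : conj ∘ (ofReal ∘ f) = ofReal ∘ f := by ext; simp
  rw [← pb_conj_comp, hf]

theorem pbR_im_eq_zero {G : Phase n → ℂ} (hG : Differentiable ℝ G)
    (h : pb (ofReal ∘ f) G = 0) : pbR f (im ∘ G) = 0 := by
  refine pbR_eq_zero_of_pb ?_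
  have him : ofReal ∘ (im ∘ G) = (-I / 2) • (G - conj ∘ G) := by
    ext w
    simp only [Function.comp_apply, Pi.smul_apply, Pi.sub_apply, smul_eq_mul, sub_conj]
    push_cast
    linear_combination ((G w).im : ℂ) * I_sq
  have hG' : Differentiable ℝ (conj ∘ G) := conjCLE.differentiable.comp hG
  rw [him, pb_smul_right (hG.sub hG'), pb_sub_right hG hG', pb_ofReal_comp_conj_comp, h]
  ext w
  simp

end Real

section Eigen

variable {n : ℕ} {f f' g g' : Phase n → ℂ} {c d : ℂ}

def IsPbEigen (f : Phase n → ℂ) (c : ℂ) (g : Phase n → ℂ) : Prop :=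
  Differentiable ℝ g ∧ pb f g = c • g

namespace IsPbEigen

theorem pb_eq_zero (hg : IsPbEigen f 0 g) : pb f g = 0 := by
  rw [hg.2, zero_smul]

theorem zero : IsPbEigen f c 0 :=
  ⟨differentiable_const 0, by rw [smul_zero]; exact pb_const_right f 0⟩

theorem const (a : ℂ) : IsPbEigen f 0 (fun _ => a) :=
  ⟨differentiable_const a, by rw [pb_const_right, zero_smul]⟩

theorem add (hg : IsPbEigen f c g) (hg' : IsPbEigen f c g') : IsPbEigen f c (g + g') :=
  ⟨hg.1.add hg'.1, by rw [pb_add_right hg.1 hg'.1, hg.2, hg'.2, smul_add]⟩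

theorem sub (hg : IsPbEigen f c g) (hg' : IsPbEigen f c g') : IsPbEigen f c (g - g') :=
  ⟨hg.1.sub hg'.1, by rw [pb_sub_right hg.1 hg'.1, hg.2, hg'.2, smul_sub]⟩

theorem const_smul (hg : IsPbEigen f c g) (a : ℂ) : IsPbEigen f c (a • g) :=
  ⟨hg.1.const_smul a, by rw [pb_smul_right hg.1, hg.2, smul_comm]⟩

theorem mul (hg : IsPbEigen f c g) (hg' : IsPbEigen f d g') : IsPbEigen f (c + d) (g * g') := by
  refine ⟨hg.1.mul hg'.1, ?_⟩
  rw [pb_mul_right hg.1 hg'.1, hg.2, hg'.2]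
  ext w
  simp only [Pi.add_apply, Pi.mul_apply, Pi.smul_apply, smul_eq_mul]
  ring

theorem pow (hg : IsPbEigen f c g) (k : ℕ) : IsPbEigen f (k * c) (g ^ k) := by
  induction k with
  | zero => rw [pow_zero, Nat.cast_zero, zero_mul]; exact const 1
  | succ k ih => simpa [pow_succ, add_mul] using ih.mul hg

theorem finset_sum {ι : Type*} {s : Finset ι} {G : ι → Phase n → ℂ}
    (h : ∀ i ∈ s, IsPbEigen f c (G i)) : IsPbEigen f c (∑ i ∈ s, G i) :=
  Finset.sum_induction G (IsPbEigen f c) (fun _ _ => add) zero h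

theorem finset_prod {ι : Type*} {s : Finset ι} {G : ι → Phase n → ℂ} {C : ι → ℂ}
    (h : ∀ i ∈ s, IsPbEigen f (C i) (G i)) : IsPbEigen f (∑ i ∈ s, C i) (∏ i ∈ s, G i) := by
  classical
  induction s using Finset.induction_on with
  | empty => rw [Finset.sum_empty, Finset.prod_empty]; exact const 1
  | insert a s ha ih =>
    rw [Finset.sum_insert ha, Finset.prod_insert ha]
    exact (h a (s.mem_insert_self a)).mul (ih fun i hi => h i (Finset.mem_insert_of_mem hi))

theorem add_left (hf : Differentiable ℝ f) (hf' : Differentiable ℝ f')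
    (h : IsPbEigen f c g) (h' : IsPbEigen f' d g) : IsPbEigen (f + f') (c + d) g :=
  ⟨h.1, by rw [pb_add_left hf hf', h.2, h'.2, add_smul]⟩

theorem smul_left (hf : Differentiable ℝ f) (h : IsPbEigen f c g) (a : ℂ) :
    IsPbEigen (a • f) (a * c) g :=
  ⟨h.1, by rw [pb_smul_left hf, h.2, smul_smul]⟩

theorem sum_left {ι : Type*} {s : Finset ι} {F : ι → Phase n → ℂ} {C : ι → ℂ}
    (hF : ∀ i ∈ s, Differentiable ℝ (F i)) (h : ∀ i ∈ s, IsPbEigen (F i) (C i) g)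
    (hg : Differentiable ℝ g) : IsPbEigen (∑ i ∈ s, F i) (∑ i ∈ s, C i) g := by
  classical
  induction s using Finset.induction_on with
  | empty =>
    simp only [Finset.sum_empty]
    exact ⟨hg, by rw [zero_smul]; exact pb_eq_zero_comm.mp (pb_const_right g 0)⟩
  | insert a s ha ih =>
    rw [Finset.sum_insert ha, Finset.sum_insert ha]
    exact add_left (hF a (s.mem_insert_self a))
      (Differentiable.sum fun i hi => hF i (Finset.mem_insert_of_mem hi))
      (h a (s.mem_insert_self a))
      (ih (fun i hi => hF i (Finset.mem_insert_of_mem hi)) fun i hi =>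
        h i (Finset.mem_insert_of_mem hi))

theorem conj_comp {f : Phase n → ℝ} (h : IsPbEigen (ofReal ∘ f) c g) :
    IsPbEigen (ofReal ∘ f) (conj c) (conj ∘ g) := by
  refine ⟨conjCLE.differentiable.comp h.1, ?_⟩
  rw [pb_ofReal_comp_conj_comp, h.2]
  ext w
  simp

end IsPbEigen

end Eigen

section Coordinates

variable {n : ℕ}

def linCoord (c : ℂ) (j : Fin n) : Phase n →L[ℝ] ℂ :=
  (√2)⁻¹ • (ofRealCLM.comp ((ContinuousLinearMap.proj j).comp (ContinuousLinearMap.fst ℝ _ _)) +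
    c • ofRealCLM.comp ((ContinuousLinearMap.proj j).comp (ContinuousLinearMap.snd ℝ _ _)))

theorem linCoord_apply (c : ℂ) (j : Fin n) (w : Phase n) :
    linCoord c j w = (w.1 j + c * w.2 j) / (√2 : ℝ) := by
  simp [linCoord, div_eq_inv_mul, real_smul, mul_add]

theorem pb_linCoord (c d : ℂ) (a b : Fin n) :
    pb (linCoord c a) (linCoord d b) = fun _ => if a = b then (c - d) / 2 else 0 := by
  ext w
  have h2 : ((√2 : ℝ) : ℂ) ^ 2 = 2 := by norm_cast; simp
  simp only [pb, ContinuousLinearMap.fderiv, linCoord_apply, Pi.zero_apply, Pi.single_apply]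
  split_ifs with hab
  · subst hab
    rw [Finset.sum_eq_single a (fun k _ hk => by simp [Ne.symm hk]) (by simp)]
    field_simp
    simp [h2]
    ring
  · refine Finset.sum_eq_zero fun k _ => ?_
    by_cases hk : a = k
    · subst hk
      simp [Ne.symm hab]
    · simp [hk]

theorem zf_eq_linCoord (j : Fin n) : zf j = linCoord (n := n) I j := by
  ext w
  rw [linCoord_apply, zf]

theorem zbf_eq_linCoord (j : Fin n) : zbf j = linCoord (n := n) (-I) j := by
  ext w
  rw [linCoord_apply, zbf, neg_mul, sub_eq_add_neg]

theorem differentiable_Iact (l : Fin n) : Differentiable ℝ (Iact (n := n) l) := by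
  change Differentiable ℝ (zf l * zbf l)
  rw [zf_eq_linCoord, zbf_eq_linCoord]
  exact (linCoord _ l).differentiable.mul (linCoord _ l).differentiable

variable (ε : Fin n → ℤ)

theorem differentiable_wfun (i : Fin n) : Differentiable ℝ (wfun ε i) := by
  unfold wfun
  split_ifs
  · exact zf_eq_linCoord i ▸ (linCoord I i).differentiable
  · exact zbf_eq_linCoord i ▸ (linCoord (-I) i).differentiable

theorem differentiable_wbfun (i : Fin n) : Differentiable ℝ (wbfun ε i) := by
  unfold wbfun
  split_ifs
  · exact zbf_eq_linCoord i ▸ (linCoord (-I) i).differentiable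
  · exact zf_eq_linCoord i ▸ (linCoord I i).differentiable

theorem conj_comp_wfun (i : Fin n) : conj ∘ wfun ε i = wbfun ε i := by
  ext w
  unfold wfun wbfun zf zbf
  split_ifs <;> simp [map_div₀, sub_eq_add_neg]

theorem conj_comp_wbfun (i : Fin n) : conj ∘ wbfun ε i = wfun ε i := by
  ext w
  simp [← conj_comp_wfun]

theorem Iact_eq_wfun_mul_wbfun (i : Fin n) : Iact i = wfun ε i * wbfun ε i := by
  ext w
  unfold Iact wfun wbfun
  split_ifs
  · rfl
  · exact mul_comm _ _

theorem Pf_eq (a b : Fin n) : Pf ε a b = I • (wfun ε a * wbfun ε b - wfun ε b * wbfun ε a) := rfl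

theorem differentiable_Pf (a b : Fin n) : Differentiable ℝ (Pf ε a b) := by
  rw [Pf_eq]
  exact (((differentiable_wfun ε a).mul (differentiable_wbfun ε b)).sub
    ((differentiable_wfun ε b).mul (differentiable_wbfun ε a))).const_smul I

theorem ofReal_comp_PfR (a b : Fin n) : ofReal ∘ PfR ε a b = Pf ε a b := by
  ext w
  refine conj_eq_iff_re.mp ?_
  have hw : ∀ i, conj (wfun ε i w) = wbfun ε i w := fun i => congrFun (conj_comp_wfun ε i) w
  have hwb : ∀ i, conj (wbfun ε i w) = wfun ε i w := fun i => congrFun (conj_comp_wbfun ε i) w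
  simp only [Pf, map_mul, map_sub, conj_I, hw, hwb]
  ring

variable {ε} (hε : ∀ i, ε i = 1 ∨ ε i = -1)
include hε

theorem wfun_eq_linCoord (i : Fin n) : wfun ε i = linCoord (ε i * I) i := by
  ext w
  unfold wfun
  rcases hε i with h | h <;> simp [h, ← zf_eq_linCoord, ← zbf_eq_linCoord]

theorem wbfun_eq_linCoord (i : Fin n) : wbfun ε i = linCoord (-(ε i * I)) i := by
  ext w
  unfold wbfun
  rcases hε i with h | h <;> simp [h, ← zf_eq_linCoord, ← zbf_eq_linCoord]

theorem pb_wfun_wfun (a b : Fin n) : pb (wfun ε a) (wfun ε b) = 0 := by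
  rw [wfun_eq_linCoord hε, wfun_eq_linCoord hε, pb_linCoord]
  ext w
  split_ifs with h
  · subst h; simp
  · rfl

theorem pb_wbfun_wfun (a b : Fin n) :
    pb (wbfun ε a) (wfun ε b) = fun _ => if a = b then -(ε a * I) else 0 := by
  rw [wbfun_eq_linCoord hε, wfun_eq_linCoord hε, pb_linCoord]
  ext w
  split_ifs with h
  · subst h; ring
  · rfl

theorem intCast_mul_self_eq_one (i : Fin n) : (ε i : ℂ) * ε i = 1 := by
  rcases hε i with h | h <;> simp [h]

theorem isPbEigen_Iact_wfun (l j : Fin n) :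
    IsPbEigen (Iact l) (if l = j then -(ε j * I) else 0) (wfun ε j) := by
  refine ⟨differentiable_wfun ε j, ?_⟩
  rw [Iact_eq_wfun_mul_wbfun ε, pb_mul_left (differentiable_wfun ε l) (differentiable_wbfun ε l),
    pb_wbfun_wfun hε, pb_wfun_wfun hε]
  ext w
  split_ifs with h
  · subst h; simp; ring
  · simp

theorem pb_Pf_wfun (a b c : Fin n) :
    pb (Pf ε a b) (wfun ε c) =
      (if b = c then (ε b : ℂ) else 0) • wfun ε a - (if a = c then (ε a : ℂ) else 0) • wfun ε b := by
  have hw := differentiable_wfun ε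
  have hwb := differentiable_wbfun ε
  rw [Pf_eq, pb_smul_left (((hw a).mul (hwb b)).sub ((hw b).mul (hwb a))),
    pb_sub_left ((hw a).mul (hwb b)) ((hw b).mul (hwb a)), pb_mul_left (hw a) (hwb b),
    pb_mul_left (hw b) (hwb a), pb_wbfun_wfun hε, pb_wbfun_wfun hε, pb_wfun_wfun hε,
    pb_wfun_wfun hε]
  ext w
  simp only [Pi.smul_apply, Pi.sub_apply, Pi.add_apply, Pi.mul_apply, Pi.zero_apply, smul_eq_mul]
  split_ifs <;> ring_nf <;> simp only [I_sq] <;> ring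

end Coordinates

section Blocks

variable {n u : ℕ} {ε : Fin n → ℤ} {pf : Fin (u + 1) → ℕ}

def block (pf : Fin (u + 1) → ℕ) (h : Fin u) : Finset (Fin n) :=
  {i | pf h.castSucc ≤ i ∧ (i : ℕ) < pf h.succ}

theorem mem_block {h : Fin u} {i : Fin n} :
    i ∈ block pf h ↔ pf h.castSucc ≤ i ∧ (i : ℕ) < pf h.succ := by
  simp [block]

theorem eq_of_mem_block (hpf : StrictMono pf) {g h : Fin u} {i : Fin n}
    (hg : i ∈ block pf g) (hh : i ∈ block pf h) : g = h := by
  have separated : ∀ {g h : Fin u}, g < h → pf g.succ ≤ pf h.castSucc :=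
    fun hlt => hpf.monotone (Fin.succ_le_castSucc_iff.mpr hlt)
  rw [mem_block] at hg hh
  rcases lt_trichotomy g h with hlt | heq | hlt
  · have := separated hlt; omega
  · exact heq
  · have := separated hlt; omega

theorem mem_block_iff_of_mem_block (hpf : StrictMono pf) {g h : Fin u} {a b : Fin n}
    (ha : a ∈ block pf g) (hb : b ∈ block pf g) : a ∈ block pf h ↔ b ∈ block pf h :=
  ⟨fun ha' => eq_of_mem_block hpf ha ha' ▸ hb, fun hb' => eq_of_mem_block hpf hb hb' ▸ ha⟩

variable (ε pf)

theorem Kc_eq (h : Fin u) : Kc ε pf h = ∑ l ∈ block pf h, (ε l : ℂ) • Iact l := by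
  ext w
  simp [Kc, block, Finset.sum_filter, Finset.sum_apply]

theorem Wc_eq (h : Fin u) : Wc ε pf h = ∑ l ∈ block pf h, (ε l : ℂ) • wfun ε l ^ 2 := by
  ext w
  simp [Wc, block, Finset.sum_filter, Finset.sum_apply]

theorem conj_comp_Wc (h : Fin u) : conj ∘ Wc ε pf h = Wbc ε pf h := by
  ext w
  simp [Wc, Wbc, apply_ite (starRingEnd ℂ), ← conj_comp_wfun ε]

theorem differentiable_Wc (h : Fin u) : Differentiable ℝ (Wc ε pf h) := by
  rw [Wc_eq]
  exact Differentiable.sum fun l _ => ((differentiable_wfun ε l).pow 2).const_smul _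

theorem differentiable_Wbc (h : Fin u) : Differentiable ℝ (Wbc ε pf h) := by
  rw [← conj_comp_Wc]
  exact conjCLE.differentiable.comp (differentiable_Wc ε pf h)

theorem RWc_eq (m : Fin u → ℤ) :
    RWc ε pf m = ∏ h, if 0 ≤ m h then Wc ε pf h ^ (m h).toNat else Wbc ε pf h ^ (-m h).toNat := by
  ext w
  rw [RWc, Finset.prod_apply]
  exact Finset.prod_congr rfl fun h _ => by split_ifs <;> rfl

theorem differentiable_RWc (m : Fin u → ℤ) : Differentiable ℝ (RWc ε pf m) := by
  rw [RWc_eq]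
  refine Finset.prod_induction _ (Differentiable ℝ) (fun _ _ => .mul) (differentiable_const 1)
    fun h _ => ?_
  split_ifs
  · exact (differentiable_Wc ε pf h).pow _
  · exact (differentiable_Wbc ε pf h).pow _

end Blocks

section Actions

variable {n u : ℕ} (ε : Fin n → ℤ) (pf : Fin (u + 1) → ℕ)

def Jr (r : Fin u → ℤ) : Phase n → ℝ := fun w => ∑ h, (r h : ℝ) * KR ε pf h w

theorem ofReal_IR (j : Fin n) (w : Phase n) : ((IR j w : ℝ) : ℂ) = Iact j w := by
  have h2 : ((√2 : ℝ) : ℂ) ^ 2 = 2 := by norm_cast; simp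
  simp only [IR, Iact, zf, zbf]
  field_simp
  rw [h2]
  push_cast
  linear_combination ((w.2 j : ℂ) ^ 2) * I_sq

theorem ofReal_comp_Jr (r : Fin u → ℤ) : ofReal ∘ Jr ε pf r = ∑ h, (r h : ℂ) • Kc ε pf h := by
  ext w
  simp [Jr, KR, Kc, Finset.sum_apply, ofReal_IR, apply_ite]

theorem differentiable_Kc (h : Fin u) : Differentiable ℝ (Kc ε pf h) := by
  rw [Kc_eq]
  exact Differentiable.sum fun l _ => (differentiable_Iact l).const_smul _

variable {ε pf} (hε : ∀ i, ε i = 1 ∨ ε i = -1)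
include hε

theorem isPbEigen_Kc_wfun (h : Fin u) (j : Fin n) :
    IsPbEigen (Kc ε pf h) (if j ∈ block pf h then -I else 0) (wfun ε j) := by
  have hsum := IsPbEigen.sum_left (s := block pf h)
    (fun l _ => (differentiable_Iact l).const_smul (ε l : ℂ))
    (fun l _ => (isPbEigen_Iact_wfun hε l j).smul_left (differentiable_Iact l) (ε l : ℂ))
    (differentiable_wfun ε j)
  rw [← Kc_eq] at hsum
  convert hsum using 1
  simp [mul_ite, Finset.sum_ite_eq', ← mul_assoc, intCast_mul_self_eq_one hε]

theorem isPbEigen_Jr_wfun (hpf : StrictMono pf) (r : Fin u → ℤ) {g : Fin u} {j : Fin n}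
    (hj : j ∈ block pf g) : IsPbEigen (ofReal ∘ Jr ε pf r) (-I * r g) (wfun ε j) := by
  have hsum := IsPbEigen.sum_left (s := Finset.univ)
    (fun h _ => (differentiable_Kc ε pf h).const_smul (r h : ℂ))
    (fun h _ => (isPbEigen_Kc_wfun hε h j).smul_left (differentiable_Kc ε pf h) (r h : ℂ))
    (differentiable_wfun ε j)
  rw [← ofReal_comp_Jr] at hsum
  convert hsum using 1
  rw [Finset.sum_eq_single g (fun h _ hne => by
    rw [if_neg fun hj' => hne (eq_of_mem_block hpf hj' hj), mul_zero]) (by simp), if_pos hj]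
  ring

theorem isPbEigen_Jr_wbfun (hpf : StrictMono pf) (r : Fin u → ℤ) {g : Fin u} {j : Fin n}
    (hj : j ∈ block pf g) : IsPbEigen (ofReal ∘ Jr ε pf r) (I * r g) (wbfun ε j) := by
  convert (isPbEigen_Jr_wfun hε hpf r hj).conj_comp using 1
  · simp
  · rw [conj_comp_wfun]

theorem isPbEigen_Jr_Pf (hpf : StrictMono pf) (r : Fin u → ℤ) {g : Fin u} {a b : Fin n}
    (ha : a ∈ block pf g) (hb : b ∈ block pf g) : IsPbEigen (ofReal ∘ Jr ε pf r) 0 (Pf ε a b) := by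
  have hab := (isPbEigen_Jr_wfun hε hpf r ha).mul (isPbEigen_Jr_wbfun hε hpf r hb)
  have hba := (isPbEigen_Jr_wfun hε hpf r hb).mul (isPbEigen_Jr_wbfun hε hpf r ha)
  rw [neg_mul, neg_add_cancel] at hab hba
  rw [Pf_eq]
  exact (hab.sub hba).const_smul I

theorem isPbEigen_Jr_Kc (hpf : StrictMono pf) (r : Fin u → ℤ) (h : Fin u) :
    IsPbEigen (ofReal ∘ Jr ε pf r) 0 (Kc ε pf h) := by
  rw [Kc_eq]
  refine IsPbEigen.finset_sum fun l hl => IsPbEigen.const_smul ?_ _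
  have hI := (isPbEigen_Jr_wfun hε hpf r hl).mul (isPbEigen_Jr_wbfun hε hpf r hl)
  rwa [neg_mul, neg_add_cancel, ← Iact_eq_wfun_mul_wbfun] at hI

theorem isPbEigen_Jr_Wc (hpf : StrictMono pf) (r : Fin u → ℤ) (h : Fin u) :
    IsPbEigen (ofReal ∘ Jr ε pf r) (-2 * I * r h) (Wc ε pf h) := by
  rw [Wc_eq]
  refine IsPbEigen.finset_sum fun l hl => IsPbEigen.const_smul ?_ _
  convert (isPbEigen_Jr_wfun hε hpf r hl).pow 2 using 1
  push_cast
  ring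

theorem isPbEigen_Jr_Wbc (hpf : StrictMono pf) (r : Fin u → ℤ) (h : Fin u) :
    IsPbEigen (ofReal ∘ Jr ε pf r) (2 * I * r h) (Wbc ε pf h) := by
  convert (isPbEigen_Jr_Wc hε hpf r h).conj_comp using 1
  · simp [map_ofNat]
  · rw [conj_comp_Wc]

theorem isPbEigen_Jr_RWc (hpf : StrictMono pf) (r m : Fin u → ℤ) :
    IsPbEigen (ofReal ∘ Jr ε pf r) (-2 * I * ((∑ h, r h * m h : ℤ) : ℂ)) (RWc ε pf m) := by
  rw [RWc_eq, Int.cast_sum, Finset.mul_sum]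
  refine IsPbEigen.finset_prod fun h _ => ?_
  split_ifs with hm
  · convert (isPbEigen_Jr_Wc hε hpf r h).pow (m h).toNat using 1
    have hcast : (((m h).toNat : ℕ) : ℂ) = m h := by exact_mod_cast Int.toNat_of_nonneg hm
    rw [hcast]
    push_cast
    ring
  · convert (isPbEigen_Jr_Wbc hε hpf r h).pow (-m h).toNat using 1
    have hcast : (((-m h).toNat : ℕ) : ℂ) = -m h := by
      exact_mod_cast Int.toNat_of_nonneg (by omega : 0 ≤ -m h)
    rw [hcast]
    push_cast
    ring

end Actions

section Momenta

variable {n u : ℕ} {ε : Fin n → ℤ} {pf : Fin (u + 1) → ℕ} (hε : ∀ i, ε i = 1 ∨ ε i = -1)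
include hε

theorem isPbEigen_Pf_wfun {a b c : Fin n} (hca : c ≠ a) (hcb : c ≠ b) :
    IsPbEigen (Pf ε a b) 0 (wfun ε c) :=
  ⟨differentiable_wfun ε c, by
    rw [pb_Pf_wfun hε, if_neg (Ne.symm hcb), if_neg (Ne.symm hca)]
    simp⟩

theorem isPbEigen_Pf_wbfun {a b c : Fin n} (hca : c ≠ a) (hcb : c ≠ b) :
    IsPbEigen (Pf ε a b) 0 (wbfun ε c) := by
  have h := (ofReal_comp_PfR ε a b ▸ isPbEigen_Pf_wfun hε hca hcb).conj_comp
  rwa [map_zero, conj_comp_wfun, ofReal_comp_PfR] at h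

theorem isPbEigen_Pf_Pf {a b c d : Fin n} (hca : c ≠ a) (hcb : c ≠ b) (hda : d ≠ a)
    (hdb : d ≠ b) : IsPbEigen (Pf ε a b) 0 (Pf ε c d) := by
  have hcd := (isPbEigen_Pf_wfun hε hca hcb).mul (isPbEigen_Pf_wbfun hε hda hdb)
  have hdc := (isPbEigen_Pf_wfun hε hda hdb).mul (isPbEigen_Pf_wbfun hε hca hcb)
  rw [add_zero] at hcd hdc
  rw [Pf_eq ε c d]
  exact (hcd.sub hdc).const_smul I

theorem pb_Pf_Wc (hpf : StrictMono pf) {g : Fin u} {a b : Fin n} (ha : a ∈ block pf g)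
    (hb : b ∈ block pf g) (h : Fin u) : pb (Pf ε a b) (Wc ε pf h) = 0 := by
  have hw := differentiable_wfun ε
  rw [Wc_eq, pb_finset_sum_right _ fun l _ => ((hw l).pow 2).const_smul _]
  ext w
  have hterm : ∀ l, pb (Pf ε a b) ((ε l : ℂ) • wfun ε l ^ 2) w =
      (if l = b then 2 * wfun ε a w * wfun ε b w else 0) -
        (if l = a then 2 * wfun ε a w * wfun ε b w else 0) := by
    intro l
    rw [pb_smul_right ((hw l).pow 2), pow_two, pb_mul_right (hw l) (hw l), pb_Pf_wfun hε]
    simp only [Pi.smul_apply, Pi.add_apply, Pi.mul_apply, Pi.sub_apply, smul_eq_mul]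
    by_cases hlb : l = b <;> by_cases hla : l = a
    · subst hlb hla
      simp
    · subst hlb
      simp only [if_true, if_neg hla, if_neg (Ne.symm hla)]
      linear_combination 2 * wfun ε a w * wfun ε l w * intCast_mul_self_eq_one hε l
    · subst hla
      simp only [if_true, if_neg hlb, if_neg (Ne.symm hlb)]
      linear_combination -2 * wfun ε l w * wfun ε b w * intCast_mul_self_eq_one hε l
    · simp [hlb, hla, Ne.symm hlb, Ne.symm hla]
  simp only [Finset.sum_apply, hterm, Finset.sum_sub_distrib, Finset.sum_ite_eq',
    mem_block_iff_of_mem_block hpf ha hb, sub_self, Pi.zero_apply]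

theorem isPbEigen_Pf_RWc (hpf : StrictMono pf) {g : Fin u} {a b : Fin n} (ha : a ∈ block pf g)
    (hb : b ∈ block pf g) (m : Fin u → ℤ) : IsPbEigen (Pf ε a b) 0 (RWc ε pf m) := by
  have hW : ∀ h, IsPbEigen (Pf ε a b) 0 (Wc ε pf h) := fun h =>
    ⟨differentiable_Wc ε pf h, by rw [pb_Pf_Wc hε hpf ha hb, zero_smul]⟩
  have hWb : ∀ h, IsPbEigen (Pf ε a b) 0 (Wbc ε pf h) := fun h => by
    have h' := (ofReal_comp_PfR ε a b ▸ hW h).conj_comp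
    rwa [map_zero, conj_comp_Wc, ofReal_comp_PfR] at h'
  rw [RWc_eq]
  simpa using IsPbEigen.finset_prod (s := Finset.univ) (C := fun _ => 0) fun h _ => by
    split_ifs
    · simpa using (hW h).pow (m h).toNat
    · simpa using (hWb h).pow (-m h).toNat

end Momenta

section Polynomials

open MvPolynomial

variable {n u : ℕ} {f : Phase n → ℂ}

theorem IsPbEigen.ofReal_comp_eval {σ : Type*} {x : σ → Phase n → ℝ}
    (hx : ∀ s, IsPbEigen f 0 (ofReal ∘ x s)) (Q : MvPolynomial σ ℝ) :
    IsPbEigen f 0 (ofReal ∘ fun w => eval (fun s => x s w) Q) := by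
  induction Q using MvPolynomial.induction_on with
  | C a => simpa [Function.comp_def] using IsPbEigen.const (f := f) (a : ℂ)
  | add p q hp hq =>
    have hsum : (ofReal ∘ fun w => eval (fun s => x s w) (p + q)) =
        (ofReal ∘ fun w => eval (fun s => x s w) p) + ofReal ∘ fun w => eval (fun s => x s w) q := by
      ext w; simp
    rw [hsum]
    exact hp.add hq
  | mul_X p s hp =>
    have hprod : (ofReal ∘ fun w => eval (fun s => x s w) (p * X s)) =
        (ofReal ∘ fun w => eval (fun s => x s w) p) * ofReal ∘ x s := by
      ext w; simp
    rw [hprod]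
    simpa using hp.mul (hx s)

theorem IsPolyInGrpMomenta.isPbEigen {ε : Fin n → ℤ} {pf : Fin (u + 1) → ℕ} {h : Fin u}
    {g : Phase n → ℝ} (hg : IsPolyInGrpMomenta ε pf h g)
    (hf : ∀ a ∈ block pf h, ∀ b ∈ block pf h, pb f (Pf ε a b) = 0) :
    IsPbEigen f 0 (ofReal ∘ g) := by
  obtain ⟨Q, -, rfl⟩ := hg
  refine IsPbEigen.ofReal_comp_eval (fun s => ?_) Q
  obtain ⟨⟨a, b⟩, hab⟩ := s
  dsimp only at hab ⊢
  rw [ofReal_comp_PfR]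
  have hlt : (a : ℕ) < b := hab.2.1
  refine ⟨differentiable_Pf ε a b, ?_⟩
  rw [zero_smul]
  exact hf a (mem_block.mpr ⟨hab.1, by omega⟩) b (mem_block.mpr ⟨by omega, hab.2.2⟩)

end Polynomials

section Commutation

variable {n u : ℕ} {ε : Fin n → ℤ} {pf : Fin (u + 1) → ℕ}
  (hε : ∀ i, ε i = 1 ∨ ε i = -1) (hpf : StrictMono pf)
include hε hpf

theorem pbR_Jr_Jr (r r' : Fin u → ℤ) : pbR (Jr ε pf r) (Jr ε pf r') = 0 := by
  refine pbR_eq_zero_of_pb ?_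
  rw [ofReal_comp_Jr ε pf r']
  exact (IsPbEigen.finset_sum fun h _ => (isPbEigen_Jr_Kc hε hpf r h).const_smul _).pb_eq_zero

theorem pbR_Jr_im_RWc {r m : Fin u → ℤ} (horth : ∑ h, r h * m h = 0) :
    pbR (Jr ε pf r) (im ∘ RWc ε pf m) = 0 := by
  have hR := isPbEigen_Jr_RWc hε hpf r m
  rw [horth, Int.cast_zero, mul_zero] at hR
  exact pbR_im_eq_zero hR.1 hR.pb_eq_zero

namespace IsPolyInGrpMomenta

variable {h h' : Fin u} {g g' : Phase n → ℝ}

theorem pbR_Jr (hg : IsPolyInGrpMomenta ε pf h g) (r : Fin u → ℤ) : pbR (Jr ε pf r) g = 0 :=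
  pbR_eq_zero_of_pb
    (hg.isPbEigen fun _ ha _ hb => (isPbEigen_Jr_Pf hε hpf r ha hb).pb_eq_zero).pb_eq_zero

theorem pbR_of_ne (hg : IsPolyInGrpMomenta ε pf h g) (hg' : IsPolyInGrpMomenta ε pf h' g')
    (hne : h ≠ h') : pbR g g' = 0 := by
  have hdisj : ∀ {i j : Fin n}, i ∈ block pf h → j ∈ block pf h' → i ≠ j :=
    fun hi hj hij => hne (eq_of_mem_block hpf (hij ▸ hi) hj)
  refine pbR_eq_zero_of_pb (hg'.isPbEigen fun c hc d hd => ?_).pb_eq_zero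
  refine pb_eq_zero_comm.mp (hg.isPbEigen fun a ha b hb => ?_).pb_eq_zero
  exact (isPbEigen_Pf_Pf hε (hdisj ha hc) (hdisj ha hd) (hdisj hb hc) (hdisj hb hd)).pb_eq_zero

theorem pbR_im_RWc (hg : IsPolyInGrpMomenta ε pf h g) (m : Fin u → ℤ) :
    pbR g (im ∘ RWc ε pf m) = 0 := by
  refine pbR_im_eq_zero (differentiable_RWc ε pf m) (pb_eq_zero_comm.mp ?_)
  exact (hg.isPbEigen fun a ha b hb => pb_eq_zero_comm.mp
    (isPbEigen_Pf_RWc hε hpf ha hb m).pb_eq_zero).pb_eq_zero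

end IsPolyInGrpMomenta

end Commutation

section Counting

theorem sum_succ_sub_castSucc {u : ℕ} {pf : Fin (u + 1) → ℕ} (hpf : Monotone pf) :
    ∑ h : Fin u, (pf h.succ - pf h.castSucc) = pf (Fin.last u) - pf 0 := by
  set F : ℕ → ℕ := fun i => pf ⟨min i u, Nat.lt_succ_of_le (min_le_right i u)⟩ with hF
  have hFmono : Monotone F := fun i j hij => hpf (Fin.mk_le_mk.mpr (min_le_min_right u hij))
  calc ∑ h : Fin u, (pf h.succ - pf h.castSucc) = ∑ h : Fin u, (F (h + 1) - F h) :=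
        Finset.sum_congr rfl fun h _ => by
          have h1 : min (h + 1 : ℕ) u = h + 1 := min_eq_left h.isLt
          have h2 : min (h : ℕ) u = h := min_eq_left h.isLt.le
          simp only [hF, h1, h2]
          rfl
    _ = F u - F 0 := by rw [Fin.sum_univ_eq_sum_range (fun i => F (i + 1) - F i),
        Finset.sum_range_tsub hFmono]
    _ = pf (Fin.last u) - pf 0 := by simp [hF]; rfl

theorem card_index_eq {n u k' : ℕ} {pf : Fin (u + 1) → ℕ} (hpf : StrictMono pf)
    (hpf0 : pf 0 = 0) (hpfn : pf (Fin.last u) = n) {q z : Fin u → ℕ}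
    (hq : ∀ h, q h = pf h.succ - pf h.castSucc)
    (hz : ∀ h, (q h = 1 → z h = 0) ∧ (1 < q h → 1 ≤ z h ∧ z h ≤ q h - 1)) (hk' : k' ≤ u) :
    Fintype.card ((Fin k' ⊕ (Σ h : Fin u, Fin (z h))) ⊕
        ((Fin (u - k') ⊕ Fin (u - k')) ⊕ (Σ h : Fin u, Fin (2 * (q h - z h - 1)))))
      = 2 * n - (k' + ∑ h : Fin u, z h) := by
  have hzq : ∀ h, q h = (q h - z h - 1) + z h + 1 := fun h => by
    have := hpf (Fin.castSucc_lt_succ (i := h))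
    have := hq h
    have := hz h
    omega
  have hsum : ∑ h, (q h - z h - 1) + ∑ h, z h + u = n := by
    have hqn : ∑ h, q h = n := by
      rw [Finset.sum_congr rfl fun h _ => hq h, sum_succ_sub_castSucc hpf.monotone, hpfn, hpf0]
      rfl
    rw [← hqn, Finset.sum_congr rfl fun h _ => hzq h]
    simp [Finset.sum_add_distrib]
  simp only [Fintype.card_sum, Fintype.card_sigma, Fintype.card_fin, ← Finset.mul_sum]
  omega

end Counting

/-- Proposition 2.2: the set
`F = (J_{r⁽¹⁾},…,J_{r⁽ᵏ'⁾}, Z₁,…,Z_u; J_{r⁽ᵏ'⁺¹⁾},…,J_{r⁽ᵘ⁾}, Im R_{m⁽¹⁾},…,Im R_{m⁽ᵘ⁻ᵏ'⁾}, L₁,…,L_u)`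
consists of `2n − k` functions, `k = k' + ∑_h z_h`, and each of its `k` central elements
`(J_{r⁽¹⁾},…,J_{r⁽ᵏ'⁾}, Z₁,…,Z_u)` Poisson-commutes with every element of `F`. -/
theorem statement10 (n u : ℕ)
    (pf : Fin (u + 1) → ℕ) (hpf : StrictMono pf) (hpf0 : pf 0 = 0)
    (hpfn : pf (Fin.last u) = n)
    (ε : Fin n → ℤ) (hε : ∀ i, ε i = 1 ∨ ε i = -1)
    (q : Fin u → ℕ) (hq : ∀ h, q h = pf h.succ - pf h.castSucc)
    (z : Fin u → ℕ)
    (hz : ∀ h, (q h = 1 → z h = 0) ∧ (1 < q h → 1 ≤ z h ∧ z h ≤ q h - 1))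
    (Z : (h : Fin u) → Fin (z h) → Phase n → ℝ)
    (L : (h : Fin u) → Fin (2 * (q h - z h - 1)) → Phase n → ℝ)
    (hZpoly : ∀ h a, IsPolyInGrpMomenta ε pf h (Z h a))
    (hLpoly : ∀ h b, IsPolyInGrpMomenta ε pf h (L h b))
    (hZcomm : ∀ h, ∀ a : Fin (z h), ∀ b : Fin (z h) ⊕ Fin (2 * (q h - z h - 1)),
      pbR (Z h a) (Sum.elim (Z h) (L h) b) = 0)
    (k' : ℕ) (hk'2 : k' ≤ u)
    (r : Fin u → Fin u → ℤ)
    (m : Fin (u - k') → Fin u → ℤ)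
    (horth : ∀ h : Fin u, (h : ℕ) < k' → ∀ j : Fin (u - k'),
      ∑ t : Fin u, r h t * m j t = 0)
    (F : (Fin k' ⊕ (Σ h : Fin u, Fin (z h))) ⊕
        ((Fin (u - k') ⊕ Fin (u - k')) ⊕ (Σ h : Fin u, Fin (2 * (q h - z h - 1)))) →
        Phase n → ℝ)
    (hF : F = Sum.elim
      (Sum.elim
        (fun i : Fin k' => fun w =>
          ∑ h : Fin u, (r ⟨(i : ℕ), by have := i.isLt; omega⟩ h : ℝ) * KR ε pf h w)
        (fun c : Σ h : Fin u, Fin (z h) => Z c.1 c.2))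
      (Sum.elim
        (Sum.elim
          (fun i : Fin (u - k') => fun w =>
            ∑ h : Fin u, (r ⟨k' + (i : ℕ), by have := i.isLt; omega⟩ h : ℝ) * KR ε pf h w)
          (fun j : Fin (u - k') => fun w => (RWc ε pf (m j) w).im))
        (fun c : Σ h : Fin u, Fin (2 * (q h - z h - 1)) => L c.1 c.2))) :
    Fintype.card ((Fin k' ⊕ (Σ h : Fin u, Fin (z h))) ⊕
        ((Fin (u - k') ⊕ Fin (u - k')) ⊕ (Σ h : Fin u, Fin (2 * (q h - z h - 1)))))
      = 2 * n - (k' + ∑ h : Fin u, z h) ∧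
    ∀ c : Fin k' ⊕ (Σ h : Fin u, Fin (z h)),
      ∀ i : (Fin k' ⊕ (Σ h : Fin u, Fin (z h))) ⊕
        ((Fin (u - k') ⊕ Fin (u - k')) ⊕ (Σ h : Fin u, Fin (2 * (q h - z h - 1)))),
        pbR (F (Sum.inl c)) (F i) = 0 := by
  subst hF
  refine ⟨card_index_eq hpf hpf0 hpfn hq hz hk'2, ?_⟩
  have hZ_Jr : ∀ h a r, pbR (Z h a) (Jr ε pf r) = 0 := fun h a r => by
    rw [pbR_comm, (hZpoly h a).pbR_Jr hε hpf r, neg_zero]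
  rintro (a | ⟨h, a⟩) ((b | ⟨h', b⟩) | ((b | j) | ⟨h', b⟩))
  · exact pbR_Jr_Jr hε hpf _ _
  · exact (hZpoly h' b).pbR_Jr hε hpf _
  · exact pbR_Jr_Jr hε hpf _ _
  · exact pbR_Jr_im_RWc hε hpf (horth ⟨a, by omega⟩ a.isLt j)
  · exact (hLpoly h' b).pbR_Jr hε hpf _
  · exact hZ_Jr h a _
  · obtain rfl | hne := eq_or_ne h h'
    · exact hZcomm h a (.inl b)
    · exact (hZpoly h a).pbR_of_ne hε hpf (hZpoly h' b) hne
  · exact hZ_Jr h a _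
  · exact (hZpoly h a).pbR_im_RWc hε hpf _
  · obtain rfl | hne := eq_or_ne h h'
    · exact hZcomm h a (.inr b)
    · exact (hZpoly h a).pbR_of_ne hε hpf (hLpoly h' b) hne
end
end

section
/- Let p and q be distinct positive integers and F_1 = p I_1 + p I_2 + q I_3 on ℝ^6. The real vector space of real homogeneous degree-2 polynomials f in (x_1,x_2,x_3,p_1,p_2,p_3) satisfying {F_1, f} = 0 has dimension 5, and the five polynomials L_1, L_2, L_3, L_4, L_5 form a basis of it. -/
noncomputable section

open Complex

/-- `L₁ = −(x₁x₂ + p₁p₂)/2`. -/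
def L1 (w : Phase 3) : ℝ := -(w.1 0 * w.1 1 + w.2 0 * w.2 1) / 2

/-- `L₂ = (p₁x₂ − x₁p₂)/2`. -/
def L2 (w : Phase 3) : ℝ := (w.2 0 * w.1 1 - w.1 0 * w.2 1) / 2

/-- `L₃ = (−x₁² − p₁² + x₂² + p₂²)/4`. -/
def L3 (w : Phase 3) : ℝ := (-w.1 0 ^ 2 - w.2 0 ^ 2 + w.1 1 ^ 2 + w.2 1 ^ 2) / 4

/-- `L₄ = −(x₁² + p₁² + x₂² + p₂²)/4`. -/
def L4 (w : Phase 3) : ℝ := -(w.1 0 ^ 2 + w.2 0 ^ 2 + w.1 1 ^ 2 + w.2 1 ^ 2) / 4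

/-- `L₅ = (x₃² + p₃²)/2`. -/
def L5 (w : Phase 3) : ℝ := (w.1 2 ^ 2 + w.2 2 ^ 2) / 2

/-- The five functions `L₁,…,L₅` as a family. -/
def Lfam : Fin 5 → Phase 3 → ℝ := ![L1, L2, L3, L4, L5]


/-!
A homogeneous quadratic function is `½ vᵀ A v` for a unique symmetric `A`, where `v = (x, p)`.
The bracket of two such functions is the quadratic form of `H J A`, so `{½ vᵀ H v, ½ vᵀ A v} = 0`
exactly when `A J H = H J A`. For the oscillator `H = diag(ω, ω)` with `ωᵢ + ωⱼ ≠ 0`, the block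
form of this equation says `A = [[X, M], [-M, X]]` with `X` and `M` commuting with `diag ω`,
i.e. vanishing between coordinates of different frequencies. For `ω = (p, p, q)` with `p ≠ q`
this leaves a symmetric `2 × 2` block, an antisymmetric `2 × 2` block and one diagonal entry:
five parameters, which are the coordinates with respect to `L₁, …, L₅`.
-/

namespace MvPolynomial

variable {σ R : Type*} [Fintype σ] [DecidableEq σ] [CommSemiring R]

open Matrix in
theorem IsHomogeneous.exists_eval_eq_dotProduct_mulVec {Q : MvPolynomial σ R}
    (hQ : Q.IsHomogeneous 2) : ∃ A : Matrix σ σ R, ∀ v, eval v Q = v ⬝ᵥ A *ᵥ v := by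
  rw [Q.as_sum]
  refine Finset.sum_induction _ (fun P => ∃ A : Matrix σ σ R, ∀ v, eval v P = v ⬝ᵥ A *ᵥ v)
    (fun P P' ⟨A, hA⟩ ⟨A', hA'⟩ => ⟨A + A', fun v => by
      simp [hA, hA', add_mulVec, dotProduct_add]⟩) ⟨0, by simp⟩ fun m hm => ?_
  obtain ⟨i, j, hij⟩ := Multiset.card_eq_two.mp
    ((Finsupp.card_toMultiset m).trans (hQ.degree_eq_sum_deg_support hm).symm)
  have hm : m = Finsupp.single i 1 + Finsupp.single j 1 := by
    rw [Finsupp.toMultiset_eq_iff.mp hij, Multiset.insert_eq_cons, ← Multiset.singleton_add,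
      Multiset.toFinsupp_add, Multiset.toFinsupp_singleton, Multiset.toFinsupp_singleton]
  refine ⟨Matrix.single i j (coeff m Q), fun v => ?_⟩
  subst hm
  simp [eval_monomial, Finsupp.prod_add_index', pow_add, single_mulVec_eq, dotProduct_single]
  ring

end MvPolynomial

namespace Matrix

open MvPolynomial in
theorem exists_isHomogeneous_eval_eq_dotProduct_mulVec {σ R : Type*} [Fintype σ] [CommSemiring R]
    (A : Matrix σ σ R) :
    ∃ Q : MvPolynomial σ R, Q.IsHomogeneous 2 ∧ ∀ v, eval v Q = v ⬝ᵥ A *ᵥ v := by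
  refine ⟨∑ i, ∑ j, C (A i j) * (X i * X j), ?_, fun v => ?_⟩
  · exact IsHomogeneous.sum _ _ _ fun i _ => IsHomogeneous.sum _ _ _ fun j _ =>
      ((isHomogeneous_X R i).mul (isHomogeneous_X R j)).C_mul _
  · simp only [map_sum, map_mul, eval_C, eval_X, dotProduct, mulVec, Finset.mul_sum]
    exact Finset.sum_congr rfl fun _ _ => Finset.sum_congr rfl fun _ _ => by ring

theorem dotProduct_J_mulVec {l R : Type*} [Fintype l] [DecidableEq l] [CommRing R]
    (x y : l ⊕ l → R) :
    x ⬝ᵥ J l R *ᵥ y = ∑ i, (x (.inr i) * y (.inl i) - x (.inl i) * y (.inr i)) := by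
  simp [J, fromBlocks_mulVec, dotProduct, Fintype.sum_sum_type, neg_mulVec, Finset.sum_sub_distrib]
  ring

variable {ι K : Type*} [Fintype ι] [DecidableEq ι] [Field K]

theorem forall_dotProduct_mulVec_self_eq_zero_iff [NeZero (2 : K)] {M : Matrix ι ι K} :
    (∀ v, v ⬝ᵥ M *ᵥ v = 0) ↔ Mᵀ = -M := by
  constructor
  · intro h
    ext i j
    have hij := h (Pi.single i 1 + Pi.single j 1)
    have hi := h (Pi.single i 1)
    have hj := h (Pi.single j 1)
    simp only [add_dotProduct, dotProduct_add, mulVec_add, single_one_dotProduct,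
      mulVec_single_one, col_apply] at hij hi hj
    simp only [transpose_apply, neg_apply]
    linear_combination hij - hi - hj
  · intro h v
    have hv := dotProduct_transpose_mulVec M v v
    rw [h, neg_mulVec, dotProduct_neg, neg_eq_iff_add_eq_zero, ← two_mul] at hv
    exact (mul_eq_zero.mp hv).resolve_left two_ne_zero

theorem commute_diagonal_iff {X : Matrix ι ι K} {c : ι → K} :
    Commute X (diagonal c) ↔ ∀ i j, c i ≠ c j → X i j = 0 := by
  simp only [Commute, SemiconjBy, ← ext_iff, mul_diagonal, diagonal_mul]
  refine forall₂_congr fun i j => ?_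
  rw [mul_comm, mul_eq_mul_right_iff, eq_comm, or_iff_not_imp_left]

theorem mul_diagonal_eq_diagonal_mul_and_iff {X Y : Matrix ι ι K} {c : ι → K}
    (hc : ∀ i j, c i + c j ≠ 0) :
    X * diagonal c = diagonal c * Y ∧ Y * diagonal c = diagonal c * X ↔
      Y = X ∧ Commute X (diagonal c) := by
  constructor
  · rintro ⟨h₁, h₂⟩
    have hYX : Y = X := by
      ext i j
      have e₁ := congr_fun₂ h₁ i j
      have e₂ := congr_fun₂ h₂ i j
      simp only [mul_diagonal, diagonal_mul] at e₁ e₂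
      have h : (Y i j - X i j) * (c i + c j) = 0 := by linear_combination e₂ - e₁
      exact sub_eq_zero.mp ((mul_eq_zero.mp h).resolve_right (hc i j))
    subst hYX
    exact ⟨rfl, h₁⟩
  · rintro ⟨rfl, h⟩
    exact ⟨h, h⟩

end Matrix

open Matrix

namespace Phase

variable {n : ℕ}

def coords (n : ℕ) : Phase n →L[ℝ] (Fin n ⊕ Fin n → ℝ) :=
  LinearMap.toContinuousLinearMap
    (LinearEquiv.sumArrowLequivProdArrow (Fin n) (Fin n) ℝ ℝ).symm.toLinearMap

@[simp] theorem coords_apply (w : Phase n) : coords n w = Sum.elim w.1 w.2 := rfl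

def quadForm (A : Matrix (Fin n ⊕ Fin n) (Fin n ⊕ Fin n) ℝ) (w : Phase n) : ℝ :=
  (Sum.elim w.1 w.2 ⬝ᵥ A *ᵥ Sum.elim w.1 w.2) / 2

def IsHomogeneousQuadratic (f : Phase n → ℝ) : Prop :=
  ∃ Q : MvPolynomial (Fin n ⊕ Fin n) ℝ, Q.IsHomogeneous 2 ∧
    f = fun w => MvPolynomial.eval (Sum.elim w.1 w.2) Q

theorem isHomogeneousQuadratic_iff {f : Phase n → ℝ} :
    IsHomogeneousQuadratic f ↔ ∃ A, A.IsSymm ∧ f = quadForm A := by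
  constructor
  · rintro ⟨Q, hQ, rfl⟩
    obtain ⟨B, hB⟩ := hQ.exists_eval_eq_dotProduct_mulVec
    refine ⟨B + Bᵀ, isSymm_add_transpose_self B, funext fun w => ?_⟩
    simp only [quadForm, hB, add_mulVec, dotProduct_add, dotProduct_transpose_mulVec]
    ring
  · rintro ⟨A, -, rfl⟩
    obtain ⟨Q, hQ, hQA⟩ := exists_isHomogeneous_eval_eq_dotProduct_mulVec ((2 : ℝ)⁻¹ • A)
    refine ⟨Q, hQ, funext fun w => ?_⟩
    simp only [quadForm, hQA, smul_mulVec, dotProduct_smul, smul_eq_mul]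
    ring

theorem fderiv_quadForm_apply {A : Matrix (Fin n ⊕ Fin n) (Fin n ⊕ Fin n) ℝ} (hA : A.IsSymm)
    (w u : Phase n) :
    fderiv ℝ (quadForm A) w u = Sum.elim u.1 u.2 ⬝ᵥ A *ᵥ Sum.elim w.1 w.2 := by
  let B := (Matrix.toLinearMap₂' ℝ A :
    (Fin n ⊕ Fin n → ℝ) →ₗ[ℝ] (Fin n ⊕ Fin n → ℝ) →ₗ[ℝ] ℝ).toContinuousBilinearMap
  have hB : quadForm A = fun w => B (coords n w) (coords n w) * 2⁻¹ := by
    ext w; simp [B, quadForm, Matrix.toLinearMap₂'_apply', div_eq_mul_inv]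
  rw [hB, ((B.hasFDerivAt_of_bilinear (coords n).hasFDerivAt
    (coords n).hasFDerivAt).mul_const 2⁻¹).fderiv]
  have hswap := dotProduct_transpose_mulVec A (Sum.elim w.1 w.2) (Sum.elim u.1 u.2)
  rw [hA.eq] at hswap
  simp [B, Matrix.toLinearMap₂'_apply', hswap]
  ring

theorem pbR_quadForm {H A : Matrix (Fin n ⊕ Fin n) (Fin n ⊕ Fin n) ℝ} (hH : H.IsSymm)
    (hA : A.IsSymm) (w : Phase n) :
    pbR (quadForm H) (quadForm A) w =
      Sum.elim w.1 w.2 ⬝ᵥ (H * J (Fin n) ℝ * A) *ᵥ Sum.elim w.1 w.2 := by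
  simp only [pbR, fderiv_quadForm_apply hH, fderiv_quadForm_apply hA, Sum.elim_zero_single,
    Sum.elim_single_zero, single_one_dotProduct]
  rw [← mulVec_mulVec, ← mulVec_mulVec, dotProduct_mulVec, ← mulVec_transpose, hH.eq,
    dotProduct_J_mulVec]

theorem pbR_quadForm_eq_zero_iff {H A : Matrix (Fin n ⊕ Fin n) (Fin n ⊕ Fin n) ℝ}
    (hH : H.IsSymm) (hA : A.IsSymm) :
    pbR (quadForm H) (quadForm A) = 0 ↔ A * J (Fin n) ℝ * H = H * J (Fin n) ℝ * A := by
  have htranspose : (H * J (Fin n) ℝ * A)ᵀ = -(A * J (Fin n) ℝ * H) := by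
    rw [transpose_mul, transpose_mul, hH.eq, hA.eq, J_transpose]
    noncomm_ring
  have hskew : A * J (Fin n) ℝ * H = H * J (Fin n) ℝ * A ↔
      (H * J (Fin n) ℝ * A)ᵀ = -(H * J (Fin n) ℝ * A) := by
    rw [htranspose, neg_inj, eq_comm]
  rw [hskew, ← forall_dotProduct_mulVec_self_eq_zero_iff, funext_iff]
  refine ⟨fun h v => ?_, fun h w => ?_⟩
  · have hv := h (v ∘ Sum.inl, v ∘ Sum.inr)
    rw [pbR_quadForm hH hA, Sum.elim_comp_inl_inr] at hv
    simpa using hv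
  · simp [pbR_quadForm hH hA, h]

def harmonicOscillator (ω : Fin n → ℝ) (w : Phase n) : ℝ := ∑ j, ω j * IR j w

theorem harmonicOscillator_eq_quadForm (ω : Fin n → ℝ) :
    harmonicOscillator ω = quadForm (fromBlocks (diagonal ω) 0 0 (diagonal ω)) := by
  ext w
  simp [harmonicOscillator, quadForm, IR, mulVec_diagonal, dotProduct, Fintype.sum_sum_type,
    ← Finset.sum_add_distrib, Finset.sum_div]
  exact Finset.sum_congr rfl fun _ _ => by ring

theorem pbR_harmonicOscillator_eq_zero_iff {ω : Fin n → ℝ} (hω : ∀ i j, ω i + ω j ≠ 0)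
    {X M N Y : Matrix (Fin n) (Fin n) ℝ} (hA : (fromBlocks X M N Y).IsSymm) :
    pbR (harmonicOscillator ω) (quadForm (fromBlocks X M N Y)) = 0 ↔
      Y = X ∧ N = -M ∧ Commute X (diagonal ω) ∧ Commute M (diagonal ω) := by
  have hH : (fromBlocks (diagonal ω) 0 0 (diagonal ω)).IsSymm :=
    (isSymm_diagonal ω).fromBlocks transpose_zero (isSymm_diagonal ω)
  rw [harmonicOscillator_eq_quadForm, pbR_quadForm_eq_zero_iff hH hA]
  simp only [J, fromBlocks_multiply, fromBlocks_inj, Matrix.mul_zero, Matrix.zero_mul, add_zero,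
    zero_add, Matrix.mul_one, Matrix.mul_neg, Matrix.neg_mul, neg_zero, neg_inj]
  -- the off-diagonal blocks satisfy the same pair of equations as the diagonal ones, for `(N, -M)`
  have hdiag := mul_diagonal_eq_diagonal_mul_and_iff (X := X) (Y := Y) hω
  have hoff := mul_diagonal_eq_diagonal_mul_and_iff (X := N) (Y := -M) hω
  simp only [Matrix.neg_mul, Matrix.mul_neg, neg_eq_iff_eq_neg] at hoff
  rw [neg_eq_iff_eq_neg]
  constructor
  · rintro ⟨h₁, h₂, h₃, h₄⟩
    obtain ⟨rfl, hX⟩ := hdiag.1 ⟨h₂, h₃⟩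
    obtain ⟨rfl, hN⟩ := hoff.1 ⟨h₄, h₁⟩
    exact ⟨rfl, (neg_neg N).symm, hX, hN.neg_left⟩
  · rintro ⟨hY, hN, hX, hM⟩
    subst Y N
    obtain ⟨h₄, h₁⟩ := hoff.2 ⟨(neg_neg M).symm, hM.neg_left⟩
    obtain ⟨h₂, h₃⟩ := hdiag.2 ⟨rfl, hX⟩
    exact ⟨h₁, h₂, h₃, h₄⟩

def resonantMatrix (a b d e g : ℝ) : Matrix (Fin 3 ⊕ Fin 3) (Fin 3 ⊕ Fin 3) ℝ :=
  fromBlocks !![a, d, 0; d, b, 0; 0, 0, g] !![0, e, 0; -e, 0, 0; 0, 0, 0]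
    (-!![0, e, 0; -e, 0, 0; 0, 0, 0]) !![a, d, 0; d, b, 0; 0, 0, g]

theorem isSymm_resonantMatrix (a b d e g : ℝ) : (resonantMatrix a b d e g).IsSymm := by
  refine IsSymm.fromBlocks ?_ ?_ ?_ <;> ext i j <;> fin_cases i <;> fin_cases j <;> simp

theorem quadForm_resonantMatrix (a b d e g : ℝ) (w : Phase 3) :
    quadForm (resonantMatrix a b d e g) w =
      (a * (w.1 0 ^ 2 + w.2 0 ^ 2) + b * (w.1 1 ^ 2 + w.2 1 ^ 2) + g * (w.1 2 ^ 2 + w.2 2 ^ 2)) / 2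
        + d * (w.1 0 * w.1 1 + w.2 0 * w.2 1) + e * (w.1 0 * w.2 1 - w.1 1 * w.2 0) := by
  simp [quadForm, resonantMatrix, dotProduct, mulVec, Fin.sum_univ_three]
  ring

theorem pbR_eq_zero_iff_eq_resonantMatrix {p q : ℝ} (hp : 0 < p) (hq : 0 < q) (hpq : p ≠ q)
    {A : Matrix (Fin 3 ⊕ Fin 3) (Fin 3 ⊕ Fin 3) ℝ} (hA : A.IsSymm) :
    pbR (harmonicOscillator ![p, p, q]) (quadForm A) = 0 ↔
      ∃ a b d e g, A = resonantMatrix a b d e g := by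
  obtain ⟨X, M, N, Y, rfl⟩ : ∃ X M N Y, A = fromBlocks X M N Y :=
    ⟨_, _, _, _, (fromBlocks_toBlocks A).symm⟩
  have hω : ∀ i j : Fin 3, ![p, p, q] i + ![p, p, q] j ≠ 0 := by
    intro i j; fin_cases i <;> fin_cases j <;> simp <;> positivity
  rw [pbR_harmonicOscillator_eq_zero_iff hω hA, commute_diagonal_iff, commute_diagonal_iff]
  constructor
  · rintro ⟨hY, hN, hX, hM⟩
    subst Y N
    obtain ⟨hXsymm, hMskew, -, -⟩ := isSymm_fromBlocks_iff.mp hA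
    have hMskew' : ∀ i j, M j i = -M i j := fun i j => congr_fun₂ hMskew i j
    have hX_eq : X = !![X 0 0, X 0 1, 0; X 0 1, X 1 1, 0; 0, 0, X 2 2] := by
      ext i j
      fin_cases i <;> fin_cases j <;> simp [hXsymm.apply 0 1] <;>
        exact hX _ _ (by simp [hpq, Ne.symm hpq])
    have hM_eq : M = !![0, M 0 1, 0; -M 0 1, 0, 0; 0, 0, 0] := by
      ext i j
      fin_cases i <;> fin_cases j <;> simp <;>
        first
        | linarith [hMskew' 0 0, hMskew' 1 1, hMskew' 2 2, hMskew' 0 1]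
        | exact hM _ _ (by simp [hpq, Ne.symm hpq])
    exact ⟨X 0 0, X 1 1, X 0 1, M 0 1, X 2 2, by rw [resonantMatrix, ← hX_eq, ← hM_eq]⟩
  · rintro ⟨a, b, d, e, g, h⟩
    obtain ⟨rfl, rfl, rfl, rfl⟩ := fromBlocks_inj.mp h
    refine ⟨rfl, rfl, ?_, ?_⟩ <;> intro i j hij <;> fin_cases i <;> fin_cases j <;>
      simp_all

theorem Lfam_eq_quadForm_resonantMatrix (μ : Fin 5) :
    ∃ a b d e g, Lfam μ = quadForm (resonantMatrix a b d e g) := by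
  fin_cases μ <;>
    [use 0, 0, -1 / 2, 0, 0; use 0, 0, 0, -1 / 2, 0; use -1 / 2, 1 / 2, 0, 0, 0;
      use -1 / 2, -1 / 2, 0, 0, 0; use 0, 0, 0, 0, 1] <;>
    ext w <;> simp [Lfam, L1, L2, L3, L4, L5, quadForm_resonantMatrix] <;> ring

theorem quadForm_resonantMatrix_mem_span (a b d e g : ℝ) :
    quadForm (resonantMatrix a b d e g) ∈ Submodule.span ℝ (Set.range Lfam) := by
  rw [Submodule.mem_span_range_iff_exists_fun]
  refine ⟨![-2 * d, -2 * e, b - a, -(a + b), g], funext fun w => ?_⟩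
  simp [Fin.sum_univ_five, Lfam, L1, L2, L3, L4, L5, quadForm_resonantMatrix]
  ring

theorem linearIndependent_Lfam : LinearIndependent ℝ Lfam := by
  rw [Fintype.linearIndependent_iff]
  intro g hg
  have h1 := congrFun hg (![1, 0, 0], ![0, 0, 0])
  have h2 := congrFun hg (![0, 1, 0], ![0, 0, 0])
  have h3 := congrFun hg (![0, 0, 1], ![0, 0, 0])
  have h4 := congrFun hg (![1, 1, 0], ![0, 0, 0])
  have h5 := congrFun hg (![1, 0, 0], ![0, 1, 0])
  simp [Fin.sum_univ_five, Lfam, L1, L2, L3, L4, L5] at h1 h2 h3 h4 h5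
  intro i
  fin_cases i <;> simp <;> linarith

end Phase

open Phase

/-- Proposition 4.2: for `F₁ = p I₁ + p I₂ + q I₃` with `p ≠ q`, the space
of real homogeneous degree-2 polynomials in involution with `F₁` has dimension 5, with
basis `L₁,…,L₅`: each `L_μ` lies in this space, the `L_μ` are linearly independent, and
every element of the space is in their span. -/
theorem statement12 (p q : ℕ) (hp : 0 < p) (hq : 0 < q) (hpq : p ≠ q)
    (F1 : Phase 3 → ℝ)
    (hF1 : F1 = fun w => (p : ℝ) * IR 0 w + (p : ℝ) * IR 1 w + (q : ℝ) * IR 2 w) :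
    (∀ μ : Fin 5,
      (∃ Q : MvPolynomial (Fin 3 ⊕ Fin 3) ℝ, Q.IsHomogeneous 2 ∧
        Lfam μ = fun w => MvPolynomial.eval (Sum.elim w.1 w.2) Q) ∧
      pbR F1 (Lfam μ) = 0) ∧
    LinearIndependent ℝ Lfam ∧
    (∀ f : Phase 3 → ℝ,
      (∃ Q : MvPolynomial (Fin 3 ⊕ Fin 3) ℝ, Q.IsHomogeneous 2 ∧
        f = fun w => MvPolynomial.eval (Sum.elim w.1 w.2) Q) →
      pbR F1 f = 0 →
      f ∈ Submodule.span ℝ (Set.range Lfam)) := by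
  have hF : F1 = harmonicOscillator ![(p : ℝ), p, q] := by
    ext w
    simp [hF1, harmonicOscillator, Fin.sum_univ_three]
  have hker {A : Matrix (Fin 3 ⊕ Fin 3) (Fin 3 ⊕ Fin 3) ℝ} (hA : A.IsSymm) :=
    pbR_eq_zero_iff_eq_resonantMatrix (p := p) (q := q) (by positivity) (by positivity)
      (by exact_mod_cast hpq) hA
  rw [hF]
  refine ⟨fun μ => ?_, linearIndependent_Lfam, fun f hf hpb => ?_⟩
  · obtain ⟨a, b, d, e, g, hμ⟩ := Lfam_eq_quadForm_resonantMatrix μ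
    have hsymm := isSymm_resonantMatrix a b d e g
    rw [hμ]
    exact ⟨isHomogeneousQuadratic_iff.mpr ⟨_, hsymm, rfl⟩, (hker hsymm).mpr ⟨a, b, d, e, g, rfl⟩⟩
  · obtain ⟨A, hA, rfl⟩ := isHomogeneousQuadratic_iff.mp hf
    obtain ⟨a, b, d, e, g, rfl⟩ := (hker hA).mp hpb
    exact quadForm_resonantMatrix_mem_span a b d e g
end
end
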